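/- arXiv:1810.12011 — 6 statements merged into one kernel-verified Lean document; each statement's English description precedes it below -/
import Mathlib

section
/- Let α ∈ (0,1), γ > 0, θ > 0 and define û(ξ,t) = exp(−(θ ξ²/(2γ)) · (1 − E_{α,1}(−γ (2t)^α))) for ξ ∈ ℝ and t ≥ 0. Then û(ξ,0) = 1 for every ξ, and for every ξ ∈ ℝ and t > 0, û(ξ,t) · (D^α (fun s => log û(ξ,s)))(t) = −(γ/2^{1−α}) · ξ · (∂/∂ξ) û(ξ,t) − (θ/2^{1−α}) · ξ² · û(ξ,t), where ∂/∂ξ denotes the derivative in the variable ξ. (This is the solution of the fractional Fokker-Planck equation in Fourier space.) -/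
open MeasureTheory

/-- The generalized Mittag-Leffler function `E_{β,γ}(z) = ∑ z^j / Γ(βj+γ)`,
with `1/Γ` the entire reciprocal Gamma (division by `0` gives `0` in Lean). -/
noncomputable def mittagLeffler (β γ z : ℝ) : ℝ :=
  ∑' j : ℕ, z ^ j / Real.Gamma (β * j + γ)

/-- The Caputo fractional derivative of order `α`. -/
noncomputable def caputoDeriv (α : ℝ) (u : ℝ → ℝ) (t : ℝ) : ℝ :=
  (1 / Real.Gamma (1 - α)) * ∫ s in Set.Ioc (0:ℝ) t, deriv u s * (t - s) ^ (-α)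



lemma factorial_ge_pow (m : ℕ) : ∀ n : ℕ, m ^ (n - m) ≤ n.factorial := by
  intro n
  induction n with
  | zero => simp
  | succ n ih =>
    rcases le_or_gt (n + 1) m with h | h
    · simp [Nat.sub_eq_zero_of_le h, Nat.one_le_iff_ne_zero.2 (Nat.factorial_ne_zero _)]
    · have hmn : m ≤ n := Nat.lt_succ_iff.mp h
      rw [Nat.succ_sub hmn, pow_succ, Nat.factorial_succ]
      calc m ^ (n - m) * m ≤ n.factorial * (n+1) :=
            Nat.mul_le_mul ih (le_of_lt h)
        _ = (n+1) * n.factorial := by ring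

lemma gamma_arg_pos {α : ℝ} (hα0 : 0 < α) (j : ℕ) : 0 < Real.Gamma (α * j + 1) := by
  apply Real.Gamma_pos_of_pos
  positivity

lemma summable_ml {α : ℝ} (hα0 : 0 < α) {x : ℝ} (hx : 0 ≤ x) :
    Summable (fun j : ℕ => x ^ j / Real.Gamma (α * j + 1)) := by
  -- choose m with  m^α ≥ 2x and m ≥ 1
  obtain ⟨m, hm⟩ := exists_nat_ge (max 1 ((2*x) ^ (1/α)))
  have hm1 : (1:ℝ) ≤ m := le_trans (le_max_left _ _) hm
  have hmα : 2 * x ≤ (m:ℝ) ^ α := by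
    have h1 : ((2*x) ^ (1/α) : ℝ) ≤ m := le_trans (le_max_right _ _) hm
    have h2 : ((2*x) ^ (1/α)) ^ α ≤ (m:ℝ) ^ α :=
      Real.rpow_le_rpow (Real.rpow_nonneg (by linarith) _) h1 hα0.le
    rwa [← Real.rpow_mul (by linarith : (0:ℝ) ≤ 2*x), one_div,
      inv_mul_cancel₀ hα0.ne', Real.rpow_one] at h2
  -- number of initial terms to drop
  obtain ⟨N, hN⟩ := exists_nat_ge (1/α)
  rw [← summable_nat_add_iff N]
  have key : ∀ j : ℕ, x ^ (j+N) / Real.Gamma (α * (j+N) + 1)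
      ≤ ((m:ℝ) ^ ((1:ℝ) + m) * (1/2) ^ N) * (1/2) ^ j := by
    intro j
    set y : ℝ := α * (j + N) with hy
    have hy1 : 1 ≤ y := by
      have : 1/α ≤ (j + N : ℝ) := le_trans hN (by push_cast; linarith)
      rw [div_le_iff₀ hα0] at this
      rw [hy]
      nlinarith [this]
    have hfl1 : 1 ≤ Nat.floor y := Nat.one_le_floor_iff _ |>.mpr hy1
    -- Gamma (y+1) ≥ (⌊y⌋)!
    have hmono := Real.Gamma_strictMonoOn_Ici.monotoneOn
    have h1 : ((Nat.floor y : ℝ)) + 1 ≤ y + 1 := by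
      have := Nat.floor_le (by linarith : (0:ℝ) ≤ y); linarith
    have hG1 : ((Nat.floor y).factorial : ℝ) ≤ Real.Gamma (y + 1) := by
      have hmem1 : ((Nat.floor y : ℝ)) + 1 ∈ Set.Ici (2:ℝ) := by
        simp only [Set.mem_Ici]
        have : (1:ℝ) ≤ (Nat.floor y : ℝ) := by exact_mod_cast hfl1
        linarith
      have hmem2 : y + 1 ∈ Set.Ici (2:ℝ) := by simp only [Set.mem_Ici]; linarith
      calc ((Nat.floor y).factorial : ℝ) = Real.Gamma ((Nat.floor y : ℝ) + 1) :=
            (Real.Gamma_nat_eq_factorial _).symm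
        _ ≤ Real.Gamma (y + 1) := hmono hmem1 hmem2 h1
    -- factorial ≥ m ^ (⌊y⌋ - m) ≥ m ^ (y - 1 - m)  (rpow)
    have hfact : (m:ℝ) ^ (y - 1 - (m:ℝ)) ≤ ((Nat.floor y).factorial : ℝ) := by
      have h2 : (m:ℝ) ^ (y - 1 - (m:ℝ)) ≤ (m:ℝ) ^ ((Nat.floor y - m : ℕ) : ℝ) := by
        apply Real.rpow_le_rpow_of_exponent_le hm1
        rcases le_or_gt (Nat.floor y) m with h | h
        · have : ((Nat.floor y - m : ℕ) : ℝ) = 0 := by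
            rw [Nat.sub_eq_zero_of_le h]; simp
          rw [this]
          have hfl : (Nat.floor y : ℝ) ≤ m := by exact_mod_cast h
          have := Nat.lt_floor_add_one y
          linarith
        · rw [Nat.cast_sub h.le]
          have := Nat.lt_floor_add_one y
          push_cast
          linarith
      calc (m:ℝ) ^ (y - 1 - (m:ℝ)) ≤ (m:ℝ) ^ ((Nat.floor y - m : ℕ) : ℝ) := h2
        _ = ((m ^ (Nat.floor y - m) : ℕ) : ℝ) := by
            rw [Real.rpow_natCast]; push_cast; ring
        _ ≤ ((Nat.floor y).factorial : ℝ) := by exact_mod_cast factorial_ge_pow m _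
    have hGpos : 0 < Real.Gamma (y + 1) := Real.Gamma_pos_of_pos (by linarith)
    have hmpow : (0:ℝ) < (m:ℝ) ^ (y - 1 - (m:ℝ)) := Real.rpow_pos_of_pos (by linarith) _
    have hGB : (m:ℝ) ^ (y - 1 - (m:ℝ)) ≤ Real.Gamma (y + 1) := le_trans hfact hG1
    have step : x ^ (j+N) / Real.Gamma (y + 1) ≤ x ^ (j+N) / (m:ℝ) ^ (y - 1 - (m:ℝ)) := by
      apply div_le_div_of_nonneg_left (by positivity) hmpow hGB
    refine le_trans step ?_
    have hmy : (0:ℝ) < (m:ℝ) ^ y := Real.rpow_pos_of_pos (by linarith) _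
    have hm1m : (0:ℝ) < (m:ℝ) ^ ((1:ℝ)+m) := Real.rpow_pos_of_pos (by linarith) _
    have hxp : x ^ (j+N) ≤ (m:ℝ) ^ y * ((1/2):ℝ) ^ (j+N) := by
      have hx2 : x ≤ (m:ℝ) ^ α * (1/2) := by linarith
      calc x ^ (j+N) ≤ ((m:ℝ) ^ α * (1/2)) ^ (j+N) := pow_le_pow_left₀ hx hx2 _
        _ = (m:ℝ) ^ y * (1/2:ℝ) ^ (j+N) := by
            rw [mul_pow, ← Real.rpow_natCast ((m:ℝ)^α), ← Real.rpow_mul (by positivity)]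
            congr 2
            rw [hy]; push_cast; ring
    have hmsplit : (m:ℝ) ^ (y - 1 - (m:ℝ)) = (m:ℝ) ^ y / (m:ℝ) ^ ((1:ℝ)+m) := by
      rw [← Real.rpow_sub (by linarith : (0:ℝ) < (m:ℝ))]; ring_nf
    rw [hmsplit]
    calc x ^ (j+N) / ((m:ℝ) ^ y / (m:ℝ) ^ ((1:ℝ)+m))
        ≤ ((m:ℝ) ^ y * ((1/2):ℝ) ^ (j+N)) / ((m:ℝ) ^ y / (m:ℝ) ^ ((1:ℝ)+m)) := by
          apply div_le_div_of_nonneg_right hxp (by positivity)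
      _ = (m:ℝ) ^ ((1:ℝ)+m) * ((1/2):ℝ) ^ (j+N) := by field_simp
      _ = (m:ℝ) ^ ((1:ℝ)+m) * (1/2) ^ N * (1/2) ^ j := by rw [pow_add]; ring
  have key' : ∀ j : ℕ, x ^ (j+N) / Real.Gamma (α * ((j+N : ℕ)) + 1)
      ≤ ((m:ℝ) ^ ((1:ℝ) + m) * (1/2) ^ N) * (1/2) ^ j := by
    intro j; have := key j; push_cast at this ⊢; exact this
  apply Summable.of_nonneg_of_le (fun j => by positivity) key' 
  exact (summable_geometric_of_lt_one (by norm_num) (by norm_num)).mul_left _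


lemma beta_intervalIntegrable {a b t : ℝ} (ha : 0 < a) (hb : 0 < b) (ht : 0 < t) :
    IntervalIntegrable (fun s => s ^ (a-1) * (t-s) ^ (b-1)) volume 0 t := by
  have h1 : IntervalIntegrable (fun s => s ^ (a-1) * (t-s) ^ (b-1)) volume 0 (t/2) := by
    apply (intervalIntegral.intervalIntegrable_rpow' (by linarith : (-1:ℝ) < a-1)).mul_continuousOn
    apply ContinuousOn.rpow_const ((continuous_const.sub continuous_id).continuousOn)
    intro s hs
    rw [Set.uIcc_of_le (by linarith : (0:ℝ) ≤ t/2)] at hs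
    left
    have := hs.2
    simp only [Pi.sub_apply, id_eq]
    intro h
    nlinarith [hs.1, hs.2]
  have h2 : IntervalIntegrable (fun s => s ^ (a-1) * (t-s) ^ (b-1)) volume (t/2) t := by
    have base : IntervalIntegrable (fun x : ℝ => x ^ (b-1)) volume 0 (t/2) :=
      intervalIntegral.intervalIntegrable_rpow' (by linarith)
    have comp := base.comp_sub_left t
    have comp' : IntervalIntegrable (fun s : ℝ => (t-s) ^ (b-1)) volume (t/2) t := by
      have e1 : t - 0 = t := by ring
      have e2 : t - t/2 = t/2 := by ring
      rw [e1, e2] at comp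
      exact comp.symm
    apply comp'.continuousOn_mul
    apply ContinuousOn.rpow_const continuous_id.continuousOn
    intro s hs
    rw [Set.uIcc_of_le (by linarith : t/2 ≤ t)] at hs
    left
    simp only [id_eq]
    intro h
    nlinarith [hs.1]
  exact h1.trans h2

lemma beta_integrableOn {a b t : ℝ} (ha : 0 < a) (hb : 0 < b) (ht : 0 < t) :
    IntegrableOn (fun s => s ^ (a-1) * (t-s) ^ (b-1)) (Set.Ioc 0 t) volume :=
  (beta_intervalIntegrable ha hb ht).1

lemma beta_eval {a b t : ℝ} (ha : 0 < a) (hb : 0 < b) (ht : 0 < t) :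
    ∫ s in Set.Ioc (0:ℝ) t, s ^ (a-1) * (t-s) ^ (b-1)
      = Real.Gamma a * Real.Gamma b / Real.Gamma (a+b) * t ^ (a+b-1) := by
  have hC := Complex.betaIntegral_scaled (a:ℂ) (b:ℂ) ht
  have hG := Complex.Gamma_mul_Gamma_eq_betaIntegral (s := (a:ℂ)) (t := (b:ℂ))
    (by simpa using ha) (by simpa using hb)
  have hGab : Complex.Gamma ((a:ℂ) + b) ≠ 0 := by
    rw [show ((a:ℂ) + b) = ((a+b : ℝ) : ℂ) by push_cast; ring, Complex.Gamma_ofReal]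
    exact_mod_cast (Real.Gamma_pos_of_pos (by linarith)).ne'
  have hBeta : Complex.betaIntegral a b
      = Complex.Gamma a * Complex.Gamma b / Complex.Gamma ((a:ℂ) + b) := by
    rw [eq_div_iff hGab]
    linear_combination -hG
  -- identify the complex interval integral with the real one
  have hre : ∫ x in (0:ℝ)..t, ((x:ℂ)) ^ ((a:ℂ) - 1) * ((t:ℂ) - x) ^ ((b:ℂ) - 1)
      = ((∫ x in (0:ℝ)..t, x ^ (a-1) * (t-x) ^ (b-1) : ℝ) : ℂ) := by
    rw [← intervalIntegral.integral_ofReal]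
    apply intervalIntegral.integral_congr
    intro x hx
    rw [Set.uIcc_of_le ht.le] at hx
    show (↑x ^ ((a:ℂ) - 1) * ((t:ℂ) - ↑x) ^ ((b:ℂ) - 1) : ℂ)
        = ((x ^ (a - 1) * (t - x) ^ (b - 1) : ℝ) : ℂ)
    rw [Complex.ofReal_mul, Complex.ofReal_cpow hx.1 (a-1),
      Complex.ofReal_cpow (show (0:ℝ) ≤ t - x by linarith [hx.2]) (b-1)]
    push_cast
    ring_nf
  rw [hre, hBeta] at hC
  have hrhs : ((t:ℂ)) ^ ((a:ℂ) + b - 1) * (Complex.Gamma a * Complex.Gamma b / Complex.Gamma ((a:ℂ) + b))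
      = ((Real.Gamma a * Real.Gamma b / Real.Gamma (a+b) * t ^ (a+b-1) : ℝ) : ℂ) := by
    rw [show ((a:ℂ) + b - 1) = ((a+b-1 : ℝ) : ℂ) by push_cast; ring,
      show ((a:ℂ) + b) = ((a+b : ℝ) : ℂ) by push_cast; ring,
      ← Complex.ofReal_cpow ht.le, Complex.Gamma_ofReal, Complex.Gamma_ofReal, Complex.Gamma_ofReal]
    push_cast
    ring
  rw [hrhs] at hC
  have := Complex.ofReal_injective hC
  rw [intervalIntegral.integral_of_le ht.le] at this
  exact this



noncomputable def mlTerm (α lam : ℝ) (j : ℕ) (s : ℝ) : ℝ :=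
  lam ^ j / Real.Gamma (α * j + 1) * s ^ (α * j)

noncomputable def mlTerm' (α lam : ℝ) (j : ℕ) (s : ℝ) : ℝ :=
  lam ^ j / Real.Gamma (α * j + 1) * (α * j * s ^ (α * j - 1))


lemma abs_mlTerm {α lam : ℝ} (hα0 : 0 < α) {s : ℝ} (hs : 0 ≤ s) (j : ℕ) :
    |mlTerm α lam j s| = (|lam| * s ^ α) ^ j / Real.Gamma (α * j + 1) := by
  have hG := gamma_arg_pos hα0 j
  have h1 : s ^ (α * (j:ℕ)) = (s ^ α) ^ j := by
    rw [Real.rpow_mul hs, Real.rpow_natCast]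
  rw [mlTerm, h1, abs_mul, abs_div, abs_pow, abs_of_pos hG, mul_pow,
    abs_of_nonneg (pow_nonneg (Real.rpow_nonneg hs α) j)]
  ring

lemma summable_mlTerm {α lam : ℝ} (hα0 : 0 < α) {s : ℝ} (hs : 0 ≤ s) :
    Summable (fun j => mlTerm α lam j s) := by
  apply Summable.of_abs
  have : (fun j => |mlTerm α lam j s|)
      = fun j : ℕ => (|lam| * s ^ α) ^ j / Real.Gamma (α * j + 1) := by
    funext j; exact abs_mlTerm hα0 hs j
  rw [this]
  exact summable_ml hα0 (by positivity)

lemma mittagLeffler_eq_tsum_mlTerm {α : ℝ} (lam : ℝ) {s : ℝ} (hs : 0 ≤ s) :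
    mittagLeffler α 1 (lam * s ^ α) = ∑' j, mlTerm α lam j s := by
  rw [mittagLeffler]
  congr 1
  funext j
  rw [mlTerm, mul_pow, ← Real.rpow_natCast (s ^ α) j, ← Real.rpow_mul hs]
  ring

lemma hasDerivAt_mlF {α lam : ℝ} (hα0 : 0 < α) {s : ℝ} (hs : 0 < s) :
    HasDerivAt (fun z => ∑' j, mlTerm α lam j z) (∑' j, mlTerm' α lam j s) s := by
  have hsT : s ∈ Set.Ioo (s/2) (s+1) := ⟨by linarith, by linarith⟩
  refine hasDerivAt_tsum_of_isPreconnected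
    (u := fun j : ℕ => (2*|lam| * (s+1) ^ α) ^ j / Real.Gamma (α * j + 1) * (α / (s/2)))
    ?_ isOpen_Ioo isPreconnected_Ioo ?_ ?_ hsT (summable_mlTerm hα0 hs.le) hsT
  · exact (summable_ml hα0 (by positivity)).mul_right _
  · intro j y hy
    exact (Real.hasDerivAt_rpow_const
      (Or.inl (show y ≠ 0 by rcases hy with ⟨h1, _⟩; intro h; rw [h] at h1; linarith))).const_mul _
  · intro j y hy
    rcases hy with ⟨hy1, hy2⟩
    have hy0 : 0 < y := by linarith
    have hG := gamma_arg_pos hα0 j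
    have hyp : y ^ (α * (j:ℕ) - 1) = y ^ (α * (j:ℕ)) / y := by
      rw [Real.rpow_sub hy0, Real.rpow_one]
    have hyb : y ^ (α * (j:ℕ)) ≤ (s+1) ^ (α * (j:ℕ)) :=
      Real.rpow_le_rpow hy0.le (by linarith) (by positivity)
    have hj2 : (j:ℝ) ≤ 2 ^ j := by exact_mod_cast (Nat.lt_two_pow_self (n := j)).le
    have e1 : y ^ (α * (j:ℕ) - 1) ≤ (s+1) ^ (α * (j:ℕ)) / (s/2) := by
      rw [hyp]
      exact div_le_div₀ (Real.rpow_nonneg (by linarith) _) hyb (by linarith) (by linarith)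
    have e2 : α * (j:ℝ) * y ^ (α * (j:ℕ) - 1)
        ≤ (α * 2 ^ j) * ((s+1) ^ (α * (j:ℕ)) / (s/2)) := by
      apply mul_le_mul (mul_le_mul_of_nonneg_left hj2 hα0.le) e1
        (Real.rpow_nonneg hy0.le _) (by positivity)
    have hnorm : ‖mlTerm' α lam j y‖
        = |lam| ^ j / Real.Gamma (α * j + 1) * (α * j * y ^ (α * (j:ℕ) - 1)) := by
      rw [mlTerm', Real.norm_eq_abs, abs_mul, abs_div, abs_pow, abs_of_pos hG,
        abs_of_nonneg (show (0:ℝ) ≤ α * j * y ^ (α * (j:ℕ) - 1) by positivity)]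
    rw [hnorm]
    have hsplit : (2*|lam| * (s+1) ^ α) ^ j = 2 ^ j * |lam| ^ j * (s+1) ^ (α * (j:ℕ)) := by
      rw [mul_pow, mul_pow, Real.rpow_mul (by linarith : (0:ℝ) ≤ s+1), Real.rpow_natCast]
    calc |lam| ^ j / Real.Gamma (α * j + 1) * (α * j * y ^ (α * (j:ℕ) - 1))
        ≤ |lam| ^ j / Real.Gamma (α * j + 1) * ((α * 2 ^ j) * ((s+1) ^ (α * (j:ℕ)) / (s/2))) :=
          mul_le_mul_of_nonneg_left e2 (by positivity)
      _ = (2*|lam| * (s+1) ^ α) ^ j / Real.Gamma (α * j + 1) * (α / (s/2)) := by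
          rw [hsplit]; ring
lemma gamma_simp {α t : ℝ} (hα : α ∈ Set.Ioo (0:ℝ) 1) (ht : 0 < t) {j : ℕ} (hj : 1 ≤ j) :
    (α * j) / Real.Gamma (α * j + 1) *
      (Real.Gamma (α * j) * Real.Gamma (1-α) / Real.Gamma (α * j + (1-α))
        * t ^ (α * j + (1-α) - 1))
    = Real.Gamma (1-α) * (t ^ (α * ((j-1:ℕ):ℝ)) / Real.Gamma (α * ((j-1:ℕ):ℝ) + 1)) := by
  obtain ⟨hα0, hα1⟩ := hα
  have hj1 : (1:ℝ) ≤ (j:ℝ) := by exact_mod_cast hj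
  have hcast : ((j-1:ℕ):ℝ) = (j:ℝ) - 1 := by rw [Nat.cast_sub hj]; simp
  rw [hcast]
  have hαj : (0:ℝ) < α * j := by nlinarith
  rw [Real.Gamma_add_one hαj.ne']
  have hexp : α * (j:ℝ) + (1-α) - 1 = α * ((j:ℝ) - 1) := by ring
  have harg : α * ((j:ℝ)-1) + 1 = α * (j:ℝ) + (1 - α) := by ring
  rw [hexp, harg]
  have hG1 : (0:ℝ) < Real.Gamma (α * j) := Real.Gamma_pos_of_pos hαj
  have hG2 : (0:ℝ) < Real.Gamma (α * (j:ℝ) + (1-α)) := by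
    apply Real.Gamma_pos_of_pos; nlinarith
  field_simp

lemma caputo_sum {α : ℝ} (hα : α ∈ Set.Ioo (0:ℝ) 1) (lam : ℝ) {t : ℝ} (ht : 0 < t) :
    ∫ s in Set.Ioc (0:ℝ) t, (∑' j, mlTerm' α lam j s) * (t-s) ^ (-α)
      = Real.Gamma (1-α) * lam * ∑' j, mlTerm α lam j t := by
  obtain ⟨hα0, hα1⟩ := hα
  set f : ℕ → ℝ → ℝ := fun j s => mlTerm' α lam j s * (t-s) ^ (-α) with hf
  set g : ℕ → ℝ → ℝ := fun j s => s ^ (α * j - 1) * (t-s) ^ ((1-α) - 1) with hg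
  set C : ℕ → ℝ := fun j => lam ^ j / Real.Gamma (α * j + 1) * (α * j) with hC
  have hfg : ∀ j : ℕ, f j = fun s => C j * g j s := by
    intro j
    funext s
    have hexp : ((1-α) - 1 : ℝ) = -α := by ring
    simp only [hf, hg, hC, mlTerm', hexp]
    ring
  have hf0 : f 0 = fun _ => 0 := by
    funext s
    simp [hf, mlTerm']
  -- the beta value
  set B : ℕ → ℝ := fun j => Real.Gamma (α * j) * Real.Gamma (1-α) / Real.Gamma (α * j + (1-α))
      * t ^ (α * j + (1-α) - 1) with hB
  have hgval : ∀ j : ℕ, 1 ≤ j → ∫ s in Set.Ioc (0:ℝ) t, g j s = B j := by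
    intro j hj
    have hj1 : (1:ℝ) ≤ (j:ℝ) := by exact_mod_cast hj
    have hαj : (0:ℝ) < α * j := by nlinarith
    exact beta_eval hαj (by linarith) ht
  have hgint : ∀ j : ℕ, 1 ≤ j → IntegrableOn (g j) (Set.Ioc 0 t) volume := by
    intro j hj
    have hj1 : (1:ℝ) ≤ (j:ℝ) := by exact_mod_cast hj
    have hαj : (0:ℝ) < α * j := by nlinarith
    exact beta_integrableOn hαj (by linarith) ht
  have hfint : ∀ j : ℕ, IntegrableOn (f j) (Set.Ioc 0 t) volume := by
    intro j
    rcases Nat.eq_zero_or_pos j with h0 | h1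
    · rw [h0, hf0]; exact integrable_zero _ _ _
    · rw [hfg j]; exact (hgint j h1).const_mul _
  -- value of each integral (signed)
  set e : ℕ → ℝ := fun j => Real.Gamma (1-α) *
      (lam ^ j * (t ^ (α * ((j-1:ℕ):ℝ)) / Real.Gamma (α * ((j-1:ℕ):ℝ) + 1))) with he
  have heval : ∀ j : ℕ, 1 ≤ j → ∫ s in Set.Ioc (0:ℝ) t, f j s = e j := by
    intro j hj
    rw [hfg j, MeasureTheory.integral_const_mul, hgval j hj, he, hC]
    have := gamma_simp ⟨hα0, hα1⟩ ht hj
    rw [hB]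
    calc lam ^ j / Real.Gamma (α * j + 1) * (α * j)
          * (Real.Gamma (α * j) * Real.Gamma (1-α) / Real.Gamma (α * j + (1-α))
            * t ^ (α * j + (1-α) - 1))
        = lam ^ j * ((α * j) / Real.Gamma (α * j + 1)
          * (Real.Gamma (α * j) * Real.Gamma (1-α) / Real.Gamma (α * j + (1-α))
            * t ^ (α * j + (1-α) - 1))) := by ring
      _ = lam ^ j * (Real.Gamma (1-α)
            * (t ^ (α * ((j-1:ℕ):ℝ)) / Real.Gamma (α * ((j-1:ℕ):ℝ) + 1))) := by rw [this]
      _ = _ := by ring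
  -- absolute bound
  set d : ℕ → ℝ := fun j => Real.Gamma (1-α) *
      (|lam| ^ j * (t ^ (α * ((j-1:ℕ):ℝ)) / Real.Gamma (α * ((j-1:ℕ):ℝ) + 1))) with hd
  have hdnn : ∀ j, 0 ≤ d j := by
    intro j
    have h1 : (0:ℝ) < Real.Gamma (1-α) := Real.Gamma_pos_of_pos (by linarith)
    have h2 := gamma_arg_pos hα0 (j-1)
    have h3 : (0:ℝ) ≤ t ^ (α * ((j-1:ℕ):ℝ)) := Real.rpow_nonneg ht.le _
    rw [hd]
    positivity
  have habs : ∀ j : ℕ, 1 ≤ j → ∫ s in Set.Ioc (0:ℝ) t, ‖f j s‖ = d j := by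
    intro j hj
    have hj1 : (1:ℝ) ≤ (j:ℝ) := by exact_mod_cast hj
    have hnormeq : ∀ s ∈ Set.Ioc (0:ℝ) t, ‖f j s‖ = |C j| * g j s := by
      intro s hs
      have hs0 : 0 < s := hs.1
      have hst : 0 ≤ t - s := by linarith [hs.2]
      have hgnn : 0 ≤ g j s := by
        rw [hg]
        exact mul_nonneg (Real.rpow_nonneg hs0.le _) (Real.rpow_nonneg hst _)
      rw [hfg j]
      simp only [Real.norm_eq_abs, abs_mul, abs_of_nonneg hgnn]
    rw [setIntegral_congr_fun measurableSet_Ioc hnormeq, MeasureTheory.integral_const_mul,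
      hgval j hj]
    have hCabs : |C j| = |lam| ^ j / Real.Gamma (α * j + 1) * (α * j) := by
      have hG := gamma_arg_pos hα0 j
      rw [hC, abs_mul, abs_div, abs_pow, abs_of_pos hG,
        abs_of_nonneg (by positivity : (0:ℝ) ≤ α * j)]
    rw [hCabs, hd, hB]
    have := gamma_simp ⟨hα0, hα1⟩ ht hj
    calc |lam| ^ j / Real.Gamma (α * j + 1) * (α * j)
          * (Real.Gamma (α * j) * Real.Gamma (1-α) / Real.Gamma (α * j + (1-α))
            * t ^ (α * j + (1-α) - 1))
        = |lam| ^ j * ((α * j) / Real.Gamma (α * j + 1)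
          * (Real.Gamma (α * j) * Real.Gamma (1-α) / Real.Gamma (α * j + (1-α))
            * t ^ (α * j + (1-α) - 1))) := by ring
      _ = |lam| ^ j * (Real.Gamma (1-α)
            * (t ^ (α * ((j-1:ℕ):ℝ)) / Real.Gamma (α * ((j-1:ℕ):ℝ) + 1))) := by rw [this]
      _ = _ := by ring
  -- summability of d
  have hdsum : Summable d := by
    apply (summable_nat_add_iff 1).mp
    have : (fun i : ℕ => d (i+1))
        = fun i : ℕ => (Real.Gamma (1-α) * |lam|) * ((|lam| * t ^ α) ^ i / Real.Gamma (α * i + 1)) := by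
      funext i
      simp only [hd]
      have h1 : ((i+1-1:ℕ):ℝ) = (i:ℝ) := by simp
      rw [h1, mul_pow, ← Real.rpow_natCast (t ^ α) i, ← Real.rpow_mul ht.le]
      ring_nf
    rw [this]
    exact ((summable_ml hα0 (by positivity)).mul_left _)
  -- measurability
  have hmeas : ∀ j : ℕ, AEStronglyMeasurable (f j) (volume.restrict (Set.Ioc (0:ℝ) t)) := by
    intro j
    apply Measurable.aestronglyMeasurable
    have hfj : f j = fun s : ℝ =>
        lam ^ j / Real.Gamma (α * j + 1) * (α * j * s ^ (α * j - 1)) * (t-s) ^ (-α) := by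
      funext s; simp only [hf, mlTerm']
    rw [hfj]
    fun_prop
  -- interchange
  have hinter : ∫ s in Set.Ioc (0:ℝ) t, (∑' j, f j s)
      = ∑' j, ∫ s in Set.Ioc (0:ℝ) t, f j s := by
    apply MeasureTheory.integral_tsum hmeas
    have hbound : ∀ j : ℕ, ∫⁻ s in Set.Ioc (0:ℝ) t, ‖f j s‖ₑ ≤ ENNReal.ofReal (d j) := by
      intro j
      rcases Nat.eq_zero_or_pos j with h0 | h1
      · rw [h0, hf0]
        simp
      · rw [← MeasureTheory.ofReal_integral_norm_eq_lintegral_enorm (hfint j)]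
        rw [habs j h1]
    refine ne_top_of_le_ne_top ?_ (ENNReal.tsum_le_tsum hbound)
    rw [← ENNReal.ofReal_tsum_of_nonneg hdnn hdsum]
    exact ENNReal.ofReal_ne_top
  -- rewrite integrand
  have hptwise : ∀ s : ℝ, (∑' j, mlTerm' α lam j s) * (t-s) ^ (-α) = ∑' j, f j s := by
    intro s
    rw [hf]
    exact (tsum_mul_right).symm
  simp_rw [hptwise]
  rw [hinter]
  -- evaluate the sum
  have hvals : (fun j => ∫ s in Set.Ioc (0:ℝ) t, f j s)
      = fun j => if j = 0 then 0 else e j := by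
    funext j
    rcases Nat.eq_zero_or_pos j with h0 | h1
    · rw [h0, hf0]; simp
    · rw [heval j h1, if_neg (Nat.pos_iff_ne_zero.mp h1)]
  rw [hvals]
  have hsum2 : Summable (fun j => if j = 0 then (0:ℝ) else e j) := by
    apply Summable.of_norm_bounded hdsum
    intro j
    rcases Nat.eq_zero_or_pos j with h0 | h1
    · rw [h0]; simpa using hdnn 0
    · rw [if_neg (Nat.pos_iff_ne_zero.mp h1), he, hd, Real.norm_eq_abs]
      have h1' : (0:ℝ) < Real.Gamma (1-α) := Real.Gamma_pos_of_pos (by linarith)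
      have h2 := gamma_arg_pos hα0 (j-1)
      have h3 : (0:ℝ) ≤ t ^ (α * ((j-1:ℕ):ℝ)) := Real.rpow_nonneg ht.le _
      rw [abs_mul, abs_mul, abs_of_pos h1', abs_pow, abs_div,
        abs_of_nonneg h3, abs_of_pos h2]
  rw [Summable.tsum_eq_zero_add hsum2]
  have hzero : (if (0:ℕ) = 0 then (0:ℝ) else e 0) = 0 := by simp
  have hsucc : (fun j : ℕ => if j + 1 = 0 then (0:ℝ) else e (j+1))
      = fun j => (Real.Gamma (1-α) * lam) * mlTerm α lam j t := by
    funext j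
    rw [if_neg (Nat.succ_ne_zero j)]
    simp only [he, mlTerm]
    have h1 : ((j+1-1:ℕ):ℝ) = (j:ℝ) := by simp
    rw [h1]; ring
  rw [hzero, hsucc, tsum_mul_left]
  ring

theorem stmt1 (α γ θ : ℝ) (hα : α ∈ Set.Ioo (0:ℝ) 1) (hγ : 0 < γ) (hθ : 0 < θ)
    (u : ℝ → ℝ → ℝ)
    (hu : ∀ ξ t : ℝ, u ξ t =
      Real.exp (-(θ * ξ ^ 2 / (2 * γ)) * (1 - mittagLeffler α 1 (-γ * (2 * t) ^ α)))) :
    (∀ ξ : ℝ, u ξ 0 = 1) ∧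
    (∀ ξ t : ℝ, 0 < t →
      u ξ t * caputoDeriv α (fun s => Real.log (u ξ s)) t
        = -(γ / (2:ℝ) ^ (1 - α)) * ξ * deriv (fun x => u x t) ξ
          - (θ / (2:ℝ) ^ (1 - α)) * ξ ^ 2 * u ξ t) := by
  obtain ⟨hα0, hα1⟩ := hα
  constructor
  · intro ξ
    rw [hu]
    have h0 : (-γ * (2*(0:ℝ)) ^ α) = 0 := by
      rw [mul_zero, Real.zero_rpow hα0.ne']; ring
    rw [h0]
    have hml1 : mittagLeffler α 1 0 = 1 := by
      rw [mittagLeffler, tsum_eq_single 0 ?_]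
      · norm_num [Real.Gamma_one]
      · intro j hj; rw [zero_pow hj, zero_div]
    rw [hml1]
    simp
  · intro ξ t ht
    set lam : ℝ := -γ * 2 ^ α with hlam
    set K : ℝ := -(θ * ξ^2 / (2*γ)) with hK
    have hml : ∀ s : ℝ, 0 ≤ s → mittagLeffler α 1 (-γ * (2*s) ^ α) = ∑' j, mlTerm α lam j s := by
      intro s hs
      have h2s : (2*s:ℝ) ^ α = 2 ^ α * s ^ α := Real.mul_rpow (by norm_num) hs
      rw [h2s, show -γ * ((2:ℝ) ^ α * s ^ α) = lam * s ^ α by rw [hlam]; ring]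
      exact mittagLeffler_eq_tsum_mlTerm lam hs
    set F : ℝ → ℝ := fun s => ∑' j, mlTerm α lam j s with hF
    have hlog : ∀ s : ℝ, 0 < s → Real.log (u ξ s) = K * (1 - F s) := by
      intro s hs
      rw [hu, Real.log_exp, hml s hs.le, hK, hF]
    have hderiv : ∀ s : ℝ, 0 < s →
        deriv (fun s => Real.log (u ξ s)) s = (-K) * ∑' j, mlTerm' α lam j s := by
      intro s hs
      have hev : (fun s => Real.log (u ξ s)) =ᶠ[nhds s] fun s => K * (1 - F s) := by
        filter_upwards [Ioi_mem_nhds hs] with y hy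
        exact hlog y hy
      rw [hev.deriv_eq]
      have hFd : HasDerivAt F (∑' j, mlTerm' α lam j s) s := hasDerivAt_mlF hα0 hs
      have h2 : HasDerivAt (fun s => K * (1 - F s))
          (K * (0 - ∑' j, mlTerm' α lam j s)) s :=
        ((hasDerivAt_const s (1:ℝ)).sub hFd).const_mul K
      rw [h2.deriv]
      ring
    have hGne : Real.Gamma (1-α) ≠ 0 := (Real.Gamma_pos_of_pos (by linarith)).ne'
    have hcap : caputoDeriv α (fun s => Real.log (u ξ s)) t = (-K) * (lam * F t) := by
      rw [caputoDeriv]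
      have hcong : ∀ s ∈ Set.Ioc (0:ℝ) t,
          deriv (fun s => Real.log (u ξ s)) s * (t - s) ^ (-α)
          = (-K) * ((∑' j, mlTerm' α lam j s) * (t-s) ^ (-α)) := by
        intro s hs
        rw [hderiv s hs.1]; ring
      rw [setIntegral_congr_fun measurableSet_Ioc hcong, MeasureTheory.integral_const_mul,
        caputo_sum ⟨hα0, hα1⟩ lam ht]
      rw [hF]
      field_simp
    have huu : u ξ t = Real.exp ((-(θ/(2*γ)) * (1 - F t)) * ξ^2) := by
      rw [hu, hml t ht.le, hF]
      congr 1
      ring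
    have hξ : deriv (fun x => u x t) ξ
        = u ξ t * ((-(θ/(2*γ)) * (1 - F t)) * (2 * ξ)) := by
      have hfun : (fun x => u x t)
          = fun x => Real.exp ((-(θ/(2*γ)) * (1 - F t)) * x^2) := by
        funext x
        rw [hu, hml t ht.le, hF]
        congr 1
        ring
      rw [hfun]
      have hin : HasDerivAt (fun x : ℝ => (-(θ/(2*γ)) * (1 - F t)) * x^2)
          ((-(θ/(2*γ)) * (1 - F t)) * (2*ξ)) ξ := by
        have h3 := (hasDerivAt_pow 2 ξ).const_mul (-(θ/(2*γ)) * (1 - F t))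
        simpa using h3
      rw [hin.exp.deriv, ← huu]
    rw [hcap, hξ, hK, hlam]
    have hAB : (2:ℝ) ^ α * 2 ^ (1-α) = 2 := by
      rw [← Real.rpow_add (by norm_num : (0:ℝ) < 2)]
      norm_num
    have hBpos : (0:ℝ) < (2:ℝ) ^ (1-α) := Real.rpow_pos_of_pos (by norm_num) _
    field_simp
    linear_combination (-(u ξ t)*ξ^2*(F t)) * hAB
end

section
/- For every α ∈ (0,1], every k > 0 and every w > 0, the function w ↦ E_{α,1}(−k w^α) is differentiable at w and its derivative equals −k w^{α−1} E_{α,α}(−k w^α). -/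
open Real Filter

/-- Key summability estimate: `∑ n R^n / Γ(αn+1)` converges for `α > 0`. -/
lemma ml_summable_aux (α : ℝ) (hα : 0 < α) (R : ℝ) :
    Summable (fun n : ℕ => (n : ℝ) * R ^ n / Real.Gamma (α * n + 1)) := by
  have hG : ∀ n : ℕ, 0 < Real.Gamma (α * n + 1) := fun n =>
    Real.Gamma_pos_of_pos (by positivity)
  set q : ℝ := 4 * (|R| + 1) with hq
  have hq1 : (1:ℝ) ≤ q := by nlinarith [abs_nonneg R]
  set K : ℕ := ⌈2 / α⌉₊ with hK
  have hKα : 2 / α ≤ K := Nat.le_ceil _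
  set c : ℝ := q ^ K with hc
  have hev1 : ∀ᶠ m : ℕ in atTop, c ^ m ≤ (m.factorial : ℝ) := by
    have h0 := (Real.summable_pow_div_factorial c).tendsto_atTop_zero
    have h2 := h0.eventually (eventually_le_nhds (by norm_num : (0:ℝ) < 1))
    filter_upwards [h2] with m hm
    have hf : (0:ℝ) < (m.factorial : ℝ) := by positivity
    rw [div_le_iff₀ hf] at hm
    linarith
  have htα : Tendsto (fun n : ℕ => α * (n:ℝ)) atTop atTop :=
    Tendsto.const_mul_atTop hα tendsto_natCast_atTop_atTop
  have hfl : Tendsto (fun n : ℕ => ⌊α * (n:ℝ)⌋₊) atTop atTop :=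
    tendsto_nat_floor_atTop.comp htα
  have hev2 : ∀ᶠ n : ℕ in atTop, c ^ ⌊α * (n:ℝ)⌋₊ ≤ ((⌊α * (n:ℝ)⌋₊).factorial : ℝ) :=
    hfl.eventually hev1
  have hev3 : ∀ᶠ n : ℕ in atTop, 2 ≤ α * (n:ℝ) := htα.eventually_ge_atTop 2
  apply summable_of_isBigO_nat
    (summable_geometric_of_lt_one (by norm_num : (0:ℝ) ≤ 1/2) (by norm_num))
  rw [Asymptotics.isBigO_iff]
  refine ⟨1, ?_⟩
  filter_upwards [hev2, hev3] with n h1 h2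
  set m : ℕ := ⌊α * (n:ℝ)⌋₊ with hm
  have hn0 : 0 ≤ α * (n:ℝ) := by linarith
  have hmn : (m:ℝ) ≤ α * n := Nat.floor_le hn0
  have hmlow : α * (n:ℝ) - 1 < m := Nat.sub_one_lt_floor _
  have hm2 : α * (n:ℝ) ≤ 2 * m := by linarith
  -- Γ(αn+1) ≥ m!
  have hΓm : ((m.factorial : ℕ) : ℝ) ≤ Real.Gamma (α * n + 1) := by
    have hmem1 : ((m : ℝ) + 1) ∈ Set.Ici (2:ℝ) := by
      simp only [Set.mem_Ici]; linarith
    have hmem2 : (α * (n:ℝ) + 1) ∈ Set.Ici (2:ℝ) := by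
      simp only [Set.mem_Ici]; linarith
    have := Real.Gamma_strictMonoOn_Ici.monotoneOn hmem1 hmem2 (by linarith)
    rwa [Real.Gamma_nat_eq_factorial] at this
  -- n ≤ m * K
  have hnmK : n ≤ K * m := by
    have hα2 : (0:ℝ) < 2 / α := by positivity
    have hKpos : (0:ℝ) < K := lt_of_lt_of_le hα2 hKα
    have h6 : α * (n:ℝ) / 2 ≤ (m:ℝ) := by linarith
    have h9 : (α * (n:ℝ) / 2) * (2 / α) ≤ (m:ℝ) * (K:ℝ) :=
      mul_le_mul h6 hKα hα2.le (by positivity)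
    have h8 : (α * (n:ℝ) / 2) * (2 / α) = n := by field_simp
    have : (n:ℝ) ≤ (K:ℝ) * (m:ℝ) := by linarith
    exact_mod_cast this
  -- chain of inequalities
  have hchain : (n:ℝ) * |R| ^ n * 2 ^ n ≤ Real.Gamma (α * n + 1) := by
    have s1 : (n:ℝ) * |R| ^ n * 2 ^ n ≤ q ^ n := by
      have hn2 : (n:ℝ) ≤ 2 ^ n := by exact_mod_cast (Nat.lt_two_pow_self (n := n)).le
      have hRp : |R| ^ n ≤ (|R| + 1) ^ n :=
        pow_le_pow_left₀ (abs_nonneg R) (by linarith) n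
      calc (n:ℝ) * |R| ^ n * 2 ^ n ≤ 2 ^ n * (|R| + 1) ^ n * 2 ^ n := by
            apply mul_le_mul_of_nonneg_right _ (by positivity)
            exact mul_le_mul hn2 hRp (by positivity) (by positivity)
        _ = (4 * (|R| + 1)) ^ n := by rw [mul_pow, show (4:ℝ) = 2*2 by norm_num, mul_pow]; ring
        _ = q ^ n := by rw [hq]
    have s2 : q ^ n ≤ c ^ m := by
      rw [hc, ← pow_mul]
      exact pow_le_pow_right₀ hq1 hnmK
    have s3 : c ^ m ≤ ((m.factorial : ℕ) : ℝ) := h1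
    linarith
  -- conclude
  have h2n : (0:ℝ) < 2 ^ n := by positivity
  have hnorm : ‖((1:ℝ)/2) ^ n‖ = 1 / 2 ^ n := by
    rw [Real.norm_eq_abs, abs_pow, abs_of_pos (by norm_num : (0:ℝ) < 1/2), div_pow, one_pow]
  rw [Real.norm_eq_abs, hnorm, abs_div, abs_of_pos (hG n), abs_mul, Nat.abs_cast, abs_pow,
    one_mul, div_le_div_iff₀ (hG n) h2n, one_mul]
  linarith

theorem stmt2 (α k w : ℝ) (hα : α ∈ Set.Ioc (0:ℝ) 1) (hk : 0 < k) (hw : 0 < w) :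
    HasDerivAt (fun v : ℝ => mittagLeffler α 1 (-k * v ^ α))
      (-k * w ^ (α - 1) * mittagLeffler α α (-k * w ^ α)) w := by
  obtain ⟨hα0, hα1⟩ := hα
  have hG : ∀ n : ℕ, 0 < Real.Gamma (α * n + 1) := fun n =>
    Real.Gamma_pos_of_pos (by positivity)
  set z₀ : ℝ := -k * w ^ α with hz₀
  set R : ℝ := |z₀| + 1 with hR
  have hR1 : (1:ℝ) ≤ R := by have := abs_nonneg z₀; linarith
  have hu : Summable (fun n : ℕ => (n:ℝ) * R ^ n / Real.Gamma (α * n + 1)) :=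
    ml_summable_aux α hα0 R
  have hbound : ∀ (n : ℕ) (y : ℝ), |y| ≤ R →
      ‖(n:ℝ) * y ^ (n-1) / Real.Gamma (α*n+1)‖ ≤ (n:ℝ) * R ^ n / Real.Gamma (α*n+1) := by
    intro n y hy
    rw [Real.norm_eq_abs, abs_div, abs_of_pos (hG n), abs_mul, Nat.abs_cast, abs_pow]
    gcongr
    calc |y| ^ (n-1) ≤ R ^ (n-1) := pow_le_pow_left₀ (abs_nonneg y) hy _
      _ ≤ R ^ n := pow_le_pow_right₀ hR1 (Nat.sub_le n 1)
  -- derivative of E_{α,1} at z₀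
  have hE1 : HasDerivAt (fun y : ℝ => ∑' n : ℕ, y ^ n / Real.Gamma (α * n + 1))
      (∑' n : ℕ, (n:ℝ) * z₀ ^ (n - 1) / Real.Gamma (α * n + 1)) z₀ := by
    apply hasDerivAt_tsum_of_isPreconnected hu (Metric.isOpen_ball (x := (0:ℝ)) (ε := R))
      (convex_ball (0:ℝ) R).isPreconnected
      (g := fun (n : ℕ) (y : ℝ) => y ^ n / Real.Gamma (α * n + 1))
      (g' := fun (n : ℕ) (y : ℝ) => (n:ℝ) * y ^ (n - 1) / Real.Gamma (α * n + 1))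
      (fun n y _ => (hasDerivAt_pow n y).div_const _)
      (fun n y hy => hbound n y (by simpa [Real.dist_eq] using (Metric.mem_ball.mp hy).le))
      (y₀ := 0) (Metric.mem_ball_self (by linarith : (0:ℝ) < R))
    · apply summable_of_ne_finset_zero (s := ({0} : Finset ℕ))
      intro n hn
      simp [zero_pow (by simpa using hn : n ≠ 0)]
    · simp [Real.dist_eq, abs_lt]
      constructor <;> nlinarith [abs_nonneg z₀, neg_abs_le z₀, le_abs_self z₀]
  -- derivative of inner function
  have hz : HasDerivAt (fun v : ℝ => -k * v ^ α) (-k * (α * w ^ (α - 1))) w :=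
    (Real.hasDerivAt_rpow_const (Or.inl hw.ne')).const_mul (-k)
  have hcomp := hE1.comp w hz
  -- summability of the derivative series
  have hDsum : Summable (fun n : ℕ => (n:ℝ) * z₀ ^ (n-1) / Real.Gamma (α*n+1)) :=
    hu.of_norm_bounded (fun n => hbound n z₀ (by linarith [abs_nonneg z₀]))
  -- the key series identity : E_{α,α}(z₀) = α * E₁'(z₀)
  have hkey : mittagLeffler α α z₀ =
      α * ∑' n : ℕ, (n:ℝ) * z₀ ^ (n-1) / Real.Gamma (α*n+1) := by
    rw [mittagLeffler, ← tsum_mul_left, Summable.tsum_eq_zero_add (hDsum.mul_left α)]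
    have h0 : α * ((0:ℕ):ℝ) * z₀ ^ (0-1) / Real.Gamma (α*(0:ℕ)+1) = 0 := by simp
    rw [show α * (((0:ℕ):ℝ) * z₀ ^ (0-1) / Real.Gamma (α*(0:ℕ)+1)) = 0 by simp, zero_add]
    apply tsum_congr
    intro j
    have hpos : (0:ℝ) < α * j + α := by positivity
    have hΓ : Real.Gamma (α * j + α) ≠ 0 := (Real.Gamma_pos_of_pos hpos).ne'
    have hΓ1 : Real.Gamma (α * ((j:ℝ)+1) + 1) = (α * j + α) * Real.Gamma (α * j + α) := by
      rw [show α * ((j:ℝ)+1) + 1 = (α * j + α) + 1 by ring]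
      exact Real.Gamma_add_one hpos.ne'
    push_cast
    rw [hΓ1]
    field_simp
  -- conclude
  have hfun : (fun v : ℝ => mittagLeffler α 1 (-k * v ^ α)) =
      ((fun y : ℝ => ∑' n : ℕ, y ^ n / Real.Gamma (α * n + 1)) ∘ (fun v : ℝ => -k * v ^ α)) := by
    funext v
    simp [mittagLeffler, Function.comp]
  rw [hfun, hkey]
  refine hcomp.congr_deriv ?_
  have hw' : w ^ (α - 1) * w ^ α = w ^ α * w ^ (α - 1) := by ring
  ring
end

section
/- For every α ∈ (0,1] and every x ≥ 0, one has E_{α,α+1}(−x) ≤ 1/Γ(α+1); consequently 1 − E_{α,1}(−x) ≤ x/Γ(α+1) for all x ≥ 0. -/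
open Real Filter MeasureTheory intervalIntegral Set

lemma gamma_interp {α y : ℝ} (hα : 0 < α) (hα1 : α ≤ 1) (hy : 0 < y) :
    Real.Gamma (y+1) ≤ Real.Gamma (y+α) * (y+α) ^ (1-α) := by
  have h1 : (0:ℝ) < y + α := by linarith
  have h2 : (0:ℝ) < y + α + 1 := by linarith
  have hc := Real.convexOn_log_Gamma.2 (Set.mem_Ioi.2 h1) (Set.mem_Ioi.2 h2)
    (le_of_lt hα) (by linarith : (0:ℝ) ≤ 1 - α) (by ring)
  have hcomb : α • (y+α) + (1-α) • (y+α+1) = y + 1 := by simp [smul_eq_mul]; ring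
  rw [hcomb] at hc
  simp only [Function.comp] at hc
  have hg1 : Real.Gamma (y+α+1) = (y+α) * Real.Gamma (y+α) := by
    rw [Real.Gamma_add_one (ne_of_gt h1)]
  have hGpos : 0 < Real.Gamma (y+α) := Real.Gamma_pos_of_pos h1
  have hGpos2 : 0 < Real.Gamma (y+1) := Real.Gamma_pos_of_pos (by linarith)
  rw [hg1, Real.log_mul (ne_of_gt h1) (ne_of_gt hGpos)] at hc
  have : Real.log (Real.Gamma (y+1)) ≤ Real.log (Real.Gamma (y+α)) + (1-α) * Real.log (y+α) := by
    simp only [smul_eq_mul] at hc; linarith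
  calc Real.Gamma (y+1) = Real.exp (Real.log (Real.Gamma (y+1))) := (Real.exp_log hGpos2).symm
    _ ≤ Real.exp (Real.log (Real.Gamma (y+α)) + (1-α) * Real.log (y+α)) := Real.exp_le_exp.2 this
    _ = Real.Gamma (y+α) * (y+α) ^ (1-α) := by
        rw [Real.exp_add, Real.exp_log hGpos, Real.rpow_def_of_pos h1, mul_comm (Real.log _)]

lemma ml_summable {α γ : ℝ} (hα : 0 < α) (hα1 : α ≤ 1) (hγ : 0 < γ) (x : ℝ) :
    Summable (fun j : ℕ => x ^ j / Real.Gamma (α * j + γ)) := by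
  apply summable_of_ratio_norm_eventually_le (r := 1/2) (by norm_num)
  have htop : Tendsto (fun j : ℕ => α * j + γ) atTop atTop := by
    apply Filter.tendsto_atTop_add_const_right
    exact Tendsto.const_mul_atTop hα tendsto_natCast_atTop_atTop
  have h1 : ∀ᶠ j : ℕ in atTop, α ≤ α * j + γ := htop.eventually_ge_atTop α
  have h2 : ∀ᶠ j : ℕ in atTop, 4 * (|x| + 1) ≤ (α * j + γ + α) ^ α := by
    have : Tendsto (fun j : ℕ => (α * j + γ + α) ^ α) atTop atTop :=
      (tendsto_rpow_atTop hα).comp (Filter.tendsto_atTop_add_const_right _ α htop)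
    exact this.eventually_ge_atTop _
  filter_upwards [h1, h2] with j hj1 hj2
  set y := α * j + γ with hy
  have hypos : 0 < y := by positivity
  have hya : 0 < y + α := by linarith
  have hG : 0 < Real.Gamma y := Real.Gamma_pos_of_pos hypos
  have hGa : 0 < Real.Gamma (y + α) := Real.Gamma_pos_of_pos hya
  have hinterp := gamma_interp hα hα1 hypos
  rw [Real.Gamma_add_one (ne_of_gt hypos)] at hinterp
  have hsplit : (y+α) ^ (1-α) = (y+α) * (y+α) ^ (-α) := by
    nth_rewrite 2 [← Real.rpow_one (y+α)]
    rw [← Real.rpow_add hya]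
    ring_nf
  have hkey : Real.Gamma y ≤ 2 * Real.Gamma (y+α) * (y+α) ^ (-α) := by
    have hrineq : (y + α) / 2 * Real.Gamma y ≤ y * Real.Gamma y := by nlinarith
    rw [hsplit] at hinterp
    have hrpos : (0:ℝ) < (y+α) ^ (-α) := Real.rpow_pos_of_pos hya _
    nlinarith
  have hrle : (y+α) ^ (-α) ≤ 1 / (4 * (|x|+1)) := by
    rw [Real.rpow_neg (le_of_lt hya)]
    have h4 : (0:ℝ) < 4 * (|x|+1) := by positivity
    rw [one_div]
    have hp : (0:ℝ) < (y+α) ^ α := Real.rpow_pos_of_pos hya _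
    exact inv_anti₀ h4 hj2
  -- now the ratio bound
  have harg : α * (j+1 : ℕ) + γ = y + α := by push_cast; ring
  rw [harg]
  rw [norm_div, norm_div, Real.norm_of_nonneg (le_of_lt hGa), Real.norm_of_nonneg (le_of_lt hG)]
  rw [pow_succ, norm_mul]
  rw [← mul_div_assoc, div_le_div_iff₀ hGa hG]
  have hx1 : 0 < |x| + 1 := by positivity
  calc ‖x ^ j‖ * ‖x‖ * Real.Gamma y ≤ ‖x ^ j‖ * ‖x‖ * (2 * Real.Gamma (y+α) * (y+α) ^ (-α)) := by
        apply mul_le_mul_of_nonneg_left hkey (by positivity)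
    _ ≤ ‖x ^ j‖ * ‖x‖ * (2 * Real.Gamma (y+α) * (1 / (4 * (|x|+1)))) := by
        apply mul_le_mul_of_nonneg_left _ (by positivity)
        apply mul_le_mul_of_nonneg_left hrle (by positivity)
    _ = 2 * ‖x ^ j‖ * Real.Gamma (y+α) * (|x| * (1 / (4 * (|x|+1)))) := by
        rw [Real.norm_eq_abs x]; ring
    _ ≤ 2 * ‖x ^ j‖ * Real.Gamma (y+α) * (1/4) := by
        have h3 : |x| * (1 / (4*(|x|+1))) ≤ 1/4 := by
          rw [mul_one_div, div_le_div_iff₀ (by positivity) (by norm_num)]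
          nlinarith [abs_nonneg x]
        exact mul_le_mul_of_nonneg_left h3 (by positivity)
    _ = 1/2 * ‖x ^ j‖ * Real.Gamma (y+α) := by ring

lemma beta_conv {a b t : ℝ} (ha : 0 < a) (hb : 0 < b) (ht : 0 < t) :
    ∫ s in (0:ℝ)..t, s ^ (b-1) * (t - s) ^ (a-1) =
      Real.Gamma a * Real.Gamma b / Real.Gamma (a+b) * t ^ (a+b-1) := by
  have hb' : 0 < (b:ℂ).re := by simpa using hb
  have ha' : 0 < (a:ℂ).re := by simpa using ha
  have hscaled := Complex.betaIntegral_scaled (b:ℂ) (a:ℂ) ht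
  have hGG := Complex.Gamma_mul_Gamma_eq_betaIntegral hb' ha'
  have hcast : ((∫ s in (0:ℝ)..t, s ^ (b-1) * (t - s) ^ (a-1) : ℝ) : ℂ)
      = ∫ s in (0:ℝ)..t, (s:ℂ) ^ ((b:ℂ)-1) * ((t:ℂ) - s) ^ ((a:ℂ)-1) := by
    rw [← intervalIntegral.integral_ofReal]
    apply intervalIntegral.integral_congr
    intro s hs
    rw [Set.uIcc_of_le (le_of_lt ht)] at hs
    obtain ⟨hs0, hst⟩ := hs
    push_cast
    rw [Complex.ofReal_cpow hs0, Complex.ofReal_cpow (by linarith : (0:ℝ) ≤ t - s)]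
    push_cast
    ring
  have hGne : Complex.Gamma ((b:ℂ) + (a:ℂ)) ≠ 0 := by
    rw [← Complex.ofReal_add, Complex.Gamma_ofReal]
    simp only [ne_eq, Complex.ofReal_eq_zero]
    exact ne_of_gt (Real.Gamma_pos_of_pos (by linarith))
  have hbeta : Complex.betaIntegral (b:ℂ) (a:ℂ)
      = Complex.Gamma b * Complex.Gamma a / Complex.Gamma ((b:ℂ)+(a:ℂ)) := by
    field_simp [hGG]
    rw [hGG]; ring
  have final : ((∫ s in (0:ℝ)..t, s ^ (b-1) * (t - s) ^ (a-1) : ℝ) : ℂ)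
      = ((Real.Gamma a * Real.Gamma b / Real.Gamma (a+b) * t ^ (a+b-1) : ℝ) : ℂ) := by
    rw [hcast, hscaled, hbeta]
    rw [show (b:ℂ) + (a:ℂ) - 1 = ((a + b - 1 : ℝ) : ℂ) by push_cast; ring]
    rw [show (b:ℂ) + (a:ℂ) = ((a + b : ℝ) : ℂ) by push_cast; ring]
    rw [← Complex.ofReal_cpow (le_of_lt ht), Complex.Gamma_ofReal, Complex.Gamma_ofReal,
      Complex.Gamma_ofReal]
    push_cast
    ring
  exact_mod_cast final

section main
variable {α : ℝ}

lemma ker_intble (hα : 0 < α) (hα1 : α ≤ 1) {c d e : ℝ} (hde : d ≤ e) (hec : e ≤ c) :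
    IntervalIntegrable (fun s => (c - s) ^ (α-1)) volume d e := by
  have h := (intervalIntegrable_rpow' (by linarith : (-1:ℝ) < α - 1)
    (a := c - e) (b := c - d)).comp_sub_left c
  simpa using h.symm

lemma ml_zero (hα : 0 < α) (γ : ℝ) (hγ : 0 < γ) : mittagLeffler α γ 0 = 1 / Real.Gamma γ := by
  unfold mittagLeffler
  rw [tsum_eq_single 0]
  · norm_num
  · intro j hj
    rw [zero_pow hj]
    simp

lemma term_eq (hα : 0 < α) {s : ℝ} (hs : 0 ≤ s) (j : ℕ) :
    (-(s^α)) ^ j = (-1) ^ j * s ^ (α * j) := by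
  rw [neg_pow, ← Real.rpow_natCast (s^α) j, ← Real.rpow_mul hs]

/-- The Volterra identity: `∫_0^t f(s)(t-s)^(α-1) ds = Γ(α)(1 - f(t))`
for `f t = E_α(-t^α)`. -/
lemma volterra (hα : 0 < α) (hα1 : α ≤ 1) {t : ℝ} (ht : 0 < t) :
    ∫ s in (0:ℝ)..t, mittagLeffler α 1 (-(s^α)) * (t - s) ^ (α-1)
      = Real.Gamma α * (1 - mittagLeffler α 1 (-(t^α))) := by
  have hta : 0 < t ^ α := Real.rpow_pos_of_pos ht α
  -- the summand functions
  set F : ℕ → ℝ → ℝ := fun j s => ((-(s^α)) ^ j / Real.Gamma (α * j + 1)) * (t - s) ^ (α-1)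
    with hF
  have hGpos : ∀ j : ℕ, 0 < Real.Gamma (α * j + 1) :=
    fun j => Real.Gamma_pos_of_pos (by positivity)
  have hGa : 0 < Real.Gamma α := Real.Gamma_pos_of_pos hα
  -- each F j is interval integrable
  have hFint : ∀ j : ℕ, IntervalIntegrable (F j) volume 0 t := by
    intro j
    have hker : IntervalIntegrable (fun s => (t - s)^(α-1)) volume 0 t :=
      ker_intble hα hα1 ht.le le_rfl
    apply IntervalIntegrable.continuousOn_mul hker
    apply ContinuousOn.div_const
    apply Continuous.continuousOn
    have hpow : Continuous fun s : ℝ => s ^ α :=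
      continuous_iff_continuousAt.2 fun x => Real.continuousAt_rpow_const x α (Or.inr hα.le)
    exact (hpow.neg).pow j
  -- value of the integral of ‖F j‖ and of F j
  have hbeta : ∀ j : ℕ, ∫ s in (0:ℝ)..t, s ^ (α * j) * (t - s) ^ (α-1)
      = Real.Gamma α * Real.Gamma (α * j + 1) / Real.Gamma (α + (α * j + 1)) * t ^ (α * j + α) := by
    intro j
    have := beta_conv hα (by positivity : (0:ℝ) < α * j + 1) ht
    rw [show α * (j:ℝ) + 1 - 1 = α * j by ring] at this
    rw [this, show α + (α * j + 1) - 1 = α * j + α by ring]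
  -- integrability on Ioc
  have hFint' : ∀ j : ℕ, Integrable (F j) (volume.restrict (Ioc (0:ℝ) t)) := fun j =>
    (intervalIntegrable_iff_integrableOn_Ioc_of_le ht.le).1 (hFint j)
  have hGne : ∀ j : ℕ, Real.Gamma (α + (α * j + 1)) ≠ 0 :=
    fun j => ne_of_gt (Real.Gamma_pos_of_pos (by positivity))
  -- norms
  have hnormval : ∀ j : ℕ, ∫ s in Ioc (0:ℝ) t, ‖F j s‖
      = Real.Gamma α * t ^ (α * j + α) / Real.Gamma (α + (α * j + 1)) := by
    intro j
    have habs : EqOn (fun s => ‖F j s‖)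
        (fun s => s ^ (α * j) * (t - s) ^ (α-1) / Real.Gamma (α * j + 1)) (Ioc 0 t) := by
      intro s hs
      obtain ⟨hs0, hst⟩ := hs
      simp only [hF, norm_mul, norm_div, Real.norm_eq_abs]
      rw [abs_of_nonneg (hGpos j).le, abs_of_nonneg (Real.rpow_nonneg (by linarith) _),
        abs_pow, abs_neg, abs_of_nonneg (Real.rpow_nonneg hs0.le _),
        ← Real.rpow_natCast (s^α) j, ← Real.rpow_mul hs0.le]
      ring
    rw [setIntegral_congr_fun measurableSet_Ioc habs, ← integral_of_le ht.le]
    simp only [div_eq_mul_inv]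
    rw [intervalIntegral.integral_mul_const, hbeta j]
    field_simp
  have hsum : Summable (fun j : ℕ => ∫ s in Ioc (0:ℝ) t, ‖F j s‖) := by
    apply Summable.congr (((ml_summable hα hα1 (by linarith : (0:ℝ) < α + 1)
      (t ^ α)).mul_left (Real.Gamma α * t ^ α)))
    intro j
    rw [hnormval j]
    rw [← Real.rpow_natCast (t^α) j, ← Real.rpow_mul ht.le,
      show α + (α * j + 1) = α * j + (α + 1) by ring,
      Real.rpow_add ht (α * j) α]
    ring
  -- the swap
  have hswap := MeasureTheory.integral_tsum_of_summable_integral_norm hFint' hsum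
  -- value of each ∫ F j
  have hFval : ∀ j : ℕ, ∫ s in Ioc (0:ℝ) t, F j s
      = (-1)^j * (Real.Gamma α * t ^ (α * j + α) / Real.Gamma (α + (α * j + 1))) := by
    intro j
    have heq : EqOn (F j)
        (fun s => s ^ (α * j) * (t - s) ^ (α-1) * ((-1)^j / Real.Gamma (α * j + 1))) (Ioc 0 t) := by
      intro s hs
      obtain ⟨hs0, hst⟩ := hs
      simp only [hF]
      rw [term_eq hα hs0.le j]
      ring
    rw [setIntegral_congr_fun measurableSet_Ioc heq, ← integral_of_le ht.le,
      intervalIntegral.integral_mul_const, hbeta j]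
    field_simp
  -- put everything together
  rw [integral_of_le ht.le]
  have hpt : ∀ s : ℝ, mittagLeffler α 1 (-(s^α)) * (t - s) ^ (α-1) = ∑' j : ℕ, F j s := by
    intro s
    rw [hF]
    exact (tsum_mul_right).symm
  rw [MeasureTheory.setIntegral_congr_fun measurableSet_Ioc (fun s _ => hpt s), ← hswap]
  -- compute the tsum
  have hsummg := ml_summable hα hα1 one_pos (-(t^α))
  have hzeroadd := Summable.tsum_eq_zero_add hsummg
  have hg0 : (-(t^α)) ^ (0:ℕ) / Real.Gamma (α * (0:ℕ) + 1) = 1 := by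
    norm_num [Real.Gamma_one]
  calc ∑' j : ℕ, ∫ s in Ioc (0:ℝ) t, F j s
      = ∑' j : ℕ, (-(Real.Gamma α)) * ((-(t^α)) ^ (j+1) / Real.Gamma (α * (j+1:ℕ) + 1)) := by
        apply tsum_congr
        intro j
        rw [hFval j]
        rw [show ((-(t^α)) ^ (j+1) : ℝ) = (-1)^(j+1) * (t^α)^(j+1) by rw [neg_pow],
          show ((j+1:ℕ):ℝ) = (j:ℝ) + 1 by push_cast; ring]
        rw [show ((t^α : ℝ))^(j+1) = (t^α)^j * t^α by ring,
          ← Real.rpow_natCast (t^α) j, ← Real.rpow_mul ht.le, ← Real.rpow_add ht,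
          show α * ((j:ℝ)+1) + 1 = α + (α * j + 1) by ring]
        rw [pow_succ]
        ring
    _ = (-(Real.Gamma α)) * ∑' j : ℕ, ((-(t^α)) ^ (j+1) / Real.Gamma (α * (j+1:ℕ) + 1)) :=
        tsum_mul_left
    _ = Real.Gamma α * (1 - mittagLeffler α 1 (-(t^α))) := by
        have : mittagLeffler α 1 (-(t^α))
            = 1 + ∑' j : ℕ, ((-(t^α)) ^ (j+1) / Real.Gamma (α * (j+1:ℕ) + 1)) := by
          unfold mittagLeffler
          rw [hzeroadd, hg0]
        rw [this]
        ring

end main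

lemma ml_cont (hα : 0 < α) (hα1 : α ≤ 1) : Continuous (fun x : ℝ => mittagLeffler α 1 x) := by
  rw [continuous_iff_continuousAt]
  intro x
  apply ContinuousOn.continuousAt (s := Icc (-(|x|+1)) (|x|+1))
  swap
  · apply Icc_mem_nhds
    · have := neg_abs_le x; linarith
    · have := le_abs_self x; linarith
  unfold mittagLeffler
  apply continuousOn_tsum (u := fun j : ℕ => (|x|+1) ^ j / Real.Gamma (α * j + 1))
  · intro j
    exact ((continuous_pow j).div_const _).continuousOn
  · exact ml_summable hα hα1 one_pos (|x|+1)
  · intro j y hy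
    obtain ⟨h1, h2⟩ := hy
    have hG : 0 < Real.Gamma (α * j + 1) := Real.Gamma_pos_of_pos (by positivity)
    rw [norm_div, Real.norm_eq_abs, Real.norm_eq_abs, abs_of_nonneg hG.le, abs_pow]
    have hy' : |y| ≤ |x| + 1 := abs_le.2 ⟨h1, h2⟩
    gcongr
  
lemma f_cont (hα : 0 < α) (hα1 : α ≤ 1) :
    Continuous (fun t : ℝ => mittagLeffler α 1 (-(t^α))) := by
  apply (ml_cont hα hα1).comp
  apply Continuous.neg
  exact continuous_iff_continuousAt.2 fun x => Real.continuousAt_rpow_const x α (Or.inr hα.le)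

lemma f_zero (hα : 0 < α) : mittagLeffler α 1 (-(0^α : ℝ)) = 1 := by
  rw [Real.zero_rpow hα.ne', neg_zero, ml_zero hα 1 one_pos, Real.Gamma_one]
  norm_num

lemma volterra' (hα : 0 < α) (hα1 : α ≤ 1) {t : ℝ} (ht : 0 ≤ t) :
    ∫ s in (0:ℝ)..t, mittagLeffler α 1 (-(s^α)) * (t - s) ^ (α-1)
      = Real.Gamma α * (1 - mittagLeffler α 1 (-(t^α))) := by
  rcases eq_or_lt_of_le ht with h | h
  · rw [← h, intervalIntegral.integral_same, f_zero hα]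
    ring
  · exact volterra hα hα1 h

lemma f_nonneg (hα : 0 < α) (hα1 : α ≤ 1) : ∀ t : ℝ, 0 ≤ t → 0 ≤ mittagLeffler α 1 (-(t^α)) := by
  intro t ht
  by_contra hneg
  push_neg at hneg
  set f : ℝ → ℝ := fun s => mittagLeffler α 1 (-(s^α)) with hf
  have hfc : Continuous f := f_cont hα hα1
  have hf0 : f 0 = 1 := f_zero hα
  have hGa : 0 < Real.Gamma α := Real.Gamma_pos_of_pos hα
  have hGa1 : 0 < Real.Gamma (α+1) := Real.Gamma_pos_of_pos (by linarith)
  set S : Set ℝ := Icc 0 t ∩ f ⁻¹' (Iic 0) with hS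
  have hS_closed : IsClosed S := isClosed_Icc.inter (isClosed_Iic.preimage hfc)
  have htS : t ∈ S := ⟨⟨ht, le_rfl⟩, le_of_lt hneg⟩
  have hbdd : BddBelow S := ⟨0, fun s hs => hs.1.1⟩
  set t0 := sInf S with ht0def
  have ht0S : t0 ∈ S := hS_closed.csInf_mem ⟨t, htS⟩ hbdd
  have ht0nn : 0 ≤ t0 := ht0S.1.1
  have hft0 : f t0 ≤ 0 := ht0S.2
  have hpos : ∀ s : ℝ, 0 ≤ s → s < t0 → 0 < f s := by
    intro s hs0 hst0
    rcases lt_or_ge 0 (f s) with h | h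
    · exact h
    · exact absurd (csInf_le hbdd ⟨⟨hs0, le_trans hst0.le ht0S.1.2⟩, h⟩) (not_le.2 hst0)
  have ht0pos : 0 < t0 := by
    rcases eq_or_lt_of_le ht0nn with h | h
    · exfalso; rw [← h] at hft0; rw [hf0] at hft0; linarith
    · exact h
  -- choice of t1 = t0 - δ
  set ε := (Real.Gamma (α+1) / 2) ^ (α⁻¹) with hε
  have hεpos : 0 < ε := Real.rpow_pos_of_pos (by positivity) _
  set δ := min t0 ε with hδ
  have hδpos : 0 < δ := lt_min ht0pos hεpos
  set t1 := t0 - δ with ht1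
  have ht1nn : 0 ≤ t1 := by
    rw [ht1, hδ, sub_nonneg]; exact min_le_left _ _
  have ht1lt : t1 < t0 := by rw [ht1]; linarith
  -- maximum of f on [t1, t0]
  obtain ⟨tm, htmI, htmax⟩ :=
    isCompact_Icc.exists_isMaxOn (nonempty_Icc.2 ht1lt.le) hfc.continuousOn
  have hMpos : 0 < f tm := lt_of_lt_of_le (hpos t1 ht1nn ht1lt) (htmax ⟨le_rfl, ht1lt.le⟩)
  have htm0 : 0 ≤ tm := le_trans ht1nn htmI.1
  have htmt0 : tm < t0 := by
    rcases lt_or_eq_of_le htmI.2 with h | h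
    · exact h
    · exfalso; rw [h] at hMpos; linarith
  -- integrabilities
  have hker1 : IntervalIntegrable (fun s => (t0 - s)^(α-1)) volume 0 tm :=
    ker_intble hα hα1 htm0 htmt0.le
  have hker1' : IntervalIntegrable (fun s => (tm - s)^(α-1)) volume 0 tm :=
    ker_intble hα hα1 htm0 le_rfl
  have hker2 : IntervalIntegrable (fun s => (t0 - s)^(α-1)) volume tm t0 :=
    ker_intble hα hα1 htmt0.le le_rfl
  have hint1 : IntervalIntegrable (fun s => f s * (t0 - s)^(α-1)) volume 0 tm :=
    hker1.continuousOn_mul hfc.continuousOn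
  have hint1' : IntervalIntegrable (fun s => f s * (tm - s)^(α-1)) volume 0 tm :=
    hker1'.continuousOn_mul hfc.continuousOn
  have hint2 : IntervalIntegrable (fun s => f s * (t0 - s)^(α-1)) volume tm t0 :=
    hker2.continuousOn_mul hfc.continuousOn
  have hint2' : IntervalIntegrable (fun s => f tm * (t0 - s)^(α-1)) volume tm t0 :=
    hker2.continuousOn_mul continuousOn_const
  -- splitting
  have hsplit : (∫ s in (0:ℝ)..t0, f s * (t0-s)^(α-1))
      = (∫ s in (0:ℝ)..tm, f s * (t0-s)^(α-1)) + ∫ s in tm..t0, f s * (t0-s)^(α-1) :=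
    (intervalIntegral.integral_add_adjacent_intervals hint1 hint2).symm
  -- first part is at most ∫₀^tm f (tm-s)^(α-1)
  have hpart1 : (∫ s in (0:ℝ)..tm, f s * (t0-s)^(α-1))
      ≤ ∫ s in (0:ℝ)..tm, f s * (tm-s)^(α-1) := by
    have hdiff : (∫ s in (0:ℝ)..tm, f s * (t0-s)^(α-1)) - ∫ s in (0:ℝ)..tm, f s * (tm-s)^(α-1)
        = ∫ s in (0:ℝ)..tm, (f s * (t0-s)^(α-1) - f s * (tm-s)^(α-1)) :=
      (intervalIntegral.integral_sub hint1 hint1').symm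
    have hle : (∫ s in (0:ℝ)..tm, (f s * (t0-s)^(α-1) - f s * (tm-s)^(α-1))) ≤ 0 := by
      rw [integral_of_le htm0, MeasureTheory.integral_Ioc_eq_integral_Ioo]
      apply MeasureTheory.setIntegral_nonpos measurableSet_Ioo
      intro s hs
      have h1 : 0 < f s := hpos s hs.1.le (lt_trans hs.2 htmt0)
      have h2 : (t0 - s)^(α-1) ≤ (tm - s)^(α-1) :=
        Real.rpow_le_rpow_of_nonpos (by linarith [hs.2]) (by linarith) (by linarith)
      nlinarith
    linarith
  -- second part bound
  have hkerval : (∫ s in tm..t0, (t0-s)^(α-1)) = (t0-tm)^α / α := by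
    rw [intervalIntegral.integral_comp_sub_left (fun x : ℝ => x^(α-1)) t0]
    rw [integral_rpow (Or.inl (by linarith : (-1:ℝ) < α - 1))]
    rw [sub_self, Real.zero_rpow (by intro h; linarith [h] : α - 1 + 1 ≠ 0)]
    rw [show α - 1 + 1 = α by ring]
    ring
  have hpart2 : (∫ s in tm..t0, f s * (t0-s)^(α-1)) ≤ f tm * ((t0-tm)^α / α) := by
    have hmono : (∫ s in tm..t0, f s * (t0-s)^(α-1)) ≤ ∫ s in tm..t0, f tm * (t0-s)^(α-1) := by
      apply intervalIntegral.integral_mono_on htmt0.le hint2 hint2'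
      intro s hs
      exact mul_le_mul_of_nonneg_right (htmax ⟨le_trans htmI.1 hs.1, hs.2⟩)
        (Real.rpow_nonneg (by linarith [hs.2]) _)
    rw [intervalIntegral.integral_const_mul, hkerval] at hmono
    exact hmono
  -- Volterra identities
  have hKt0 := volterra' hα hα1 ht0nn
  have hKtm := volterra' hα hα1 htm0
  have hKdiff : Real.Gamma α * (f tm - f t0)
      = (∫ s in (0:ℝ)..t0, f s * (t0-s)^(α-1)) - ∫ s in (0:ℝ)..tm, f s * (tm-s)^(α-1) := by
    rw [hKt0, hKtm]; ring
  -- size bound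
  have hub : (t0 - tm)^α ≤ Real.Gamma (α+1) / 2 := by
    have h1 : t0 - tm ≤ δ := by
      have := htmI.1; rw [ht1] at this; linarith
    have h2 : (t0-tm)^α ≤ δ^α := Real.rpow_le_rpow (by linarith) h1 hα.le
    have h3 : δ^α ≤ ε^α := Real.rpow_le_rpow (le_of_lt hδpos) (min_le_right _ _) hα.le
    have h4 : ε^α = Real.Gamma (α+1) / 2 := Real.rpow_inv_rpow (by positivity) hα.ne'
    linarith
  -- contradiction
  have hchain : Real.Gamma α * (f tm - f t0) ≤ f tm * ((t0-tm)^α / α) := by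
    rw [hKdiff, hsplit]; linarith
  have hlast : f tm * ((t0-tm)^α / α) ≤ f tm * (Real.Gamma α / 2) := by
    apply mul_le_mul_of_nonneg_left _ hMpos.le
    rw [div_le_iff₀ hα, Real.Gamma_add_one hα.ne'] at *
    nlinarith [hub]
  have hprod : Real.Gamma α * f t0 ≤ 0 := mul_nonpos_of_nonneg_of_nonpos hGa.le hft0
  nlinarith [mul_pos hGa hMpos]

lemma f_le_one (hα : 0 < α) (hα1 : α ≤ 1) {s : ℝ} (hs : 0 ≤ s) :
    mittagLeffler α 1 (-(s^α)) ≤ 1 := by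
  have hGa : 0 < Real.Gamma α := Real.Gamma_pos_of_pos hα
  have hv := volterra' hα hα1 hs
  have hnn : 0 ≤ ∫ σ in (0:ℝ)..s, mittagLeffler α 1 (-(σ^α)) * (s-σ)^(α-1) := by
    apply intervalIntegral.integral_nonneg hs
    intro σ hσ
    exact mul_nonneg (f_nonneg hα hα1 σ hσ.1) (Real.rpow_nonneg (by linarith [hσ.2]) _)
  nlinarith

lemma one_sub_le (hα : 0 < α) (hα1 : α ≤ 1) {t : ℝ} (ht : 0 ≤ t) :
    1 - mittagLeffler α 1 (-(t^α)) ≤ t^α / Real.Gamma (α+1) := by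
  have hGa : 0 < Real.Gamma α := Real.Gamma_pos_of_pos hα
  have hGa1 : 0 < Real.Gamma (α+1) := Real.Gamma_pos_of_pos (by linarith)
  rcases eq_or_lt_of_le ht with h | h
  · rw [← h, f_zero hα, Real.zero_rpow hα.ne']
    norm_num
  · have hv := volterra' hα hα1 ht
    have hker : IntervalIntegrable (fun σ => (t - σ)^(α-1)) volume 0 t :=
      ker_intble hα hα1 ht le_rfl
    have hint : IntervalIntegrable (fun σ => mittagLeffler α 1 (-(σ^α)) * (t - σ)^(α-1))
        volume 0 t := hker.continuousOn_mul (f_cont hα hα1).continuousOn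
    have hmono : (∫ σ in (0:ℝ)..t, mittagLeffler α 1 (-(σ^α)) * (t-σ)^(α-1))
        ≤ ∫ σ in (0:ℝ)..t, (t-σ)^(α-1) := by
      apply intervalIntegral.integral_mono_on ht hint hker
      intro σ hσ
      have := mul_le_mul_of_nonneg_right (f_le_one hα hα1 hσ.1)
        (Real.rpow_nonneg (by linarith [hσ.2] : (0:ℝ) ≤ t - σ) (α-1))
      rwa [one_mul] at this
    have hkerval : (∫ σ in (0:ℝ)..t, (t-σ)^(α-1)) = t^α / α := by
      rw [intervalIntegral.integral_comp_sub_left (fun x : ℝ => x^(α-1)) t]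
      rw [integral_rpow (Or.inl (by linarith : (-1:ℝ) < α - 1))]
      rw [sub_self, Real.zero_rpow (by intro hh; linarith [hh] : α - 1 + 1 ≠ 0)]
      rw [show α - 1 + 1 = α by ring]
      ring
    rw [hkerval] at hmono
    rw [hv] at hmono
    -- Γα (1 - f t) ≤ t^α/α  ⇒  1 - f t ≤ t^α/Γ(α+1)
    rw [Real.Gamma_add_one hα.ne']
    rw [le_div_iff₀ (by positivity)]
    have h2 := mul_le_mul_of_nonneg_left hmono hα.le
    have h3 : α * (t^α/α) = t^α := by field_simp
    nlinarith

theorem stmt7 (α x : ℝ) (hα : α ∈ Set.Ioc (0:ℝ) 1) (hx : 0 ≤ x) :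
    mittagLeffler α (α + 1) (-x) ≤ 1 / Real.Gamma (α + 1) ∧
    1 - mittagLeffler α 1 (-x) ≤ x / Real.Gamma (α + 1) := by
  obtain ⟨hα0, hα1⟩ := hα
  have hGa1 : 0 < Real.Gamma (α+1) := Real.Gamma_pos_of_pos (by linarith)
  have hB : 1 - mittagLeffler α 1 (-x) ≤ x / Real.Gamma (α + 1) := by
    have ht : (0:ℝ) ≤ x ^ (α⁻¹) := Real.rpow_nonneg hx _
    have htα : (x ^ (α⁻¹)) ^ α = x := Real.rpow_inv_rpow hx hα0.ne'
    have := one_sub_le hα0 hα1 ht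
    rwa [htα] at this
  refine ⟨?_, hB⟩
  rcases eq_or_lt_of_le hx with h | h
  · rw [← h, neg_zero, ml_zero hα0 (α+1) (by linarith)]
  · -- shift identity : x * E_{α,α+1}(-x) = 1 - E_{α,1}(-x)
    have hsummg := ml_summable hα0 hα1 one_pos (-x)
    have hzeroadd := Summable.tsum_eq_zero_add hsummg
    have hg0 : (-x) ^ (0:ℕ) / Real.Gamma (α * (0:ℕ) + 1) = 1 := by
      norm_num [Real.Gamma_one]
    have hshift : x * mittagLeffler α (α+1) (-x) = 1 - mittagLeffler α 1 (-x) := by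
      unfold mittagLeffler
      rw [← tsum_mul_left]
      rw [hzeroadd, hg0]
      have : ∀ j : ℕ, x * ((-x) ^ j / Real.Gamma (α * j + (α+1)))
          = -((-x) ^ (j+1) / Real.Gamma (α * (j+1:ℕ) + 1)) := by
        intro j
        rw [pow_succ, show ((j+1:ℕ):ℝ) = (j:ℝ)+1 by push_cast; ring,
          show α * ((j:ℝ)+1) + 1 = α * j + (α+1) by ring]
        ring
      rw [tsum_congr this, tsum_neg]
      ring
    have hxv : x * mittagLeffler α (α+1) (-x) ≤ x * (1 / Real.Gamma (α+1)) := by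
      rw [hshift]
      calc 1 - mittagLeffler α 1 (-x) ≤ x / Real.Gamma (α+1) := hB
        _ = x * (1 / Real.Gamma (α+1)) := by ring
    exact le_of_mul_le_mul_left hxv h
end

section
/- For all a > 0, x > 0 and t > 0, one has e^{−x − a t} + ∫_0^t e^{−x − a z} · (∑_{j=1}^∞ (x a)^j z^{j−1} / (j! (j−1)!)) · e^{−a(t−z)} dz = e^{−x − a t} · ∑_{j=0}^∞ (x a t)^j / (j!)². (This gives the transition density l_g(x,t) = e^{−x−at} W_{1,1}(xat) of the inverse of the compound Poisson subordinator with exponential jumps, where W_{1,1} is the Wright function W_{1,1}(z) = ∑_{j=0}^∞ z^j/(j!)².) -/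
open MeasureTheory

/-!
The two exponentials combine to `exp (-x - a t)`, independent of `z`. The series in the integrand
is dominated on `[0, t]` by `|c| (|c| |t|)^n / n!` with `c = x a`, so it can be integrated term by
term; since `(n+1)! = (n+1) n!`, this gives `∑ (c t)^(n+1) / ((n+1)!)^2`, which is the Wright
series `W_{1,1}(c t)` without its constant term `1`.
-/

open Set Nat

theorem hasSum_intervalIntegral_tsum_mul_pow (b : ℕ → ℝ) (t : ℝ)
    (hb : Summable fun n => |b n| * |t| ^ n) :
    HasSum (fun n => b n * t ^ (n + 1) / (n + 1)) (∫ z in (0:ℝ)..t, ∑' n, b n * z ^ n) := by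
  have hle : ∀ n, ∀ z ∈ uIoc (0:ℝ) t, ‖b n * z ^ n‖ ≤ |b n| * |t| ^ n := by
    intro n z hz
    rw [norm_mul, norm_pow, Real.norm_eq_abs, Real.norm_eq_abs]
    have hzt : |z| ≤ |t| := by simpa using abs_sub_left_of_mem_uIcc (uIoc_subset_uIcc hz)
    gcongr
  have htermwise := intervalIntegral.hasSum_integral_of_dominated_convergence
    (μ := volume) (F := fun n z => b n * z ^ n) (fun n _ => |b n| * |t| ^ n)
    (fun n => (by fun_prop : Continuous fun z : ℝ => b n * z ^ n).aestronglyMeasurable)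
    (fun n => Filter.Eventually.of_forall (hle n))
    (Filter.Eventually.of_forall fun _ _ => hb) intervalIntegrable_const
    (Filter.Eventually.of_forall fun z hz =>
      (hb.of_norm_bounded fun n => hle n z hz).hasSum)
  simpa [intervalIntegral.integral_const_mul, integral_pow, mul_div_assoc] using htermwise

theorem summable_abs_pow_succ_div_factorial_mul_factorial (c t : ℝ) :
    Summable fun n : ℕ => |c ^ (n + 1) / ((n + 1)! * n ! : ℝ)| * |t| ^ n := by
  refine Summable.of_nonneg_of_le (fun n => by positivity) (fun n => ?_)
    ((Real.summable_pow_div_factorial (|c| * |t|)).mul_left |c|)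
  have hfac : (n ! : ℝ) ≤ (n + 1)! * n ! :=
    le_mul_of_one_le_left (by positivity) (mod_cast (n + 1).factorial_pos)
  calc |c ^ (n + 1) / ((n + 1)! * n ! : ℝ)| * |t| ^ n
      = |c| * ((|c| * |t|) ^ n / ((n + 1)! * n !)) := by
        rw [abs_div, abs_pow, abs_of_pos (by positivity : (0:ℝ) < (n + 1)! * n !)]; ring
    _ ≤ |c| * ((|c| * |t|) ^ n / n !) := by gcongr

theorem hasSum_intervalIntegral_wright_series (c t : ℝ) :
    HasSum (fun n : ℕ => (c * t) ^ (n + 1) / ((n + 1)! : ℝ) ^ 2)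
      (∫ z in (0:ℝ)..t, ∑' n : ℕ, c ^ (n + 1) * z ^ n / ((n + 1)! * n ! : ℝ)) := by
  convert hasSum_intervalIntegral_tsum_mul_pow _ t
    (summable_abs_pow_succ_div_factorial_mul_factorial c t) using 1
  · ext n
    push_cast [Nat.factorial_succ]
    field_simp
    ring
  · simp_rw [mul_div_right_comm]

theorem stmt15_general (a x t : ℝ) :
    Real.exp (-x - a * t) +
      (∫ z in (0:ℝ)..t,
        Real.exp (-x - a * z) *
          (∑' j : ℕ, (x * a) ^ (j + 1) * z ^ j /
            ((Nat.factorial (j + 1) : ℝ) * (Nat.factorial j : ℝ))) *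
          Real.exp (-a * (t - z)))
      = Real.exp (-x - a * t) * ∑' j : ℕ, (x * a * t) ^ j / ((Nat.factorial j : ℝ)) ^ 2 := by
  have hexp : ∀ z S, Real.exp (-x - a * z) * S * Real.exp (-a * (t - z)) =
      Real.exp (-x - a * t) * S :=
    fun z S => by rw [mul_right_comm, ← Real.exp_add]; ring_nf
  have hwright := (hasSum_nat_add_iff (f := fun n => (x * a * t) ^ n / (n ! : ℝ) ^ 2) 1).mp
    (hasSum_intervalIntegral_wright_series (x * a) t)
  simp only [Finset.range_one, Finset.sum_singleton, pow_zero, factorial_zero, cast_one,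
    one_pow, div_one] at hwright
  simp_rw [hexp, intervalIntegral.integral_const_mul, hwright.tsum_eq]
  ring

theorem stmt15 (a x t : ℝ) (ha : 0 < a) (hx : 0 < x) (ht : 0 < t) :
    Real.exp (-x - a * t) +
      (∫ z in (0:ℝ)..t,
        Real.exp (-x - a * z) *
          (∑' j : ℕ, (x * a) ^ (j + 1) * z ^ j /
            ((Nat.factorial (j + 1) : ℝ) * (Nat.factorial j : ℝ))) *
          Real.exp (-a * (t - z)))
      = Real.exp (-x - a * t) * ∑' j : ℕ, (x * a * t) ^ j / ((Nat.factorial j : ℝ)) ^ 2 :=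
  stmt15_general a x t
end

section
/- For all a > 0, γ > 0 and t ≥ 0, one has ∫_0^∞ e^{−γ x} · e^{−x − a t} · ∑_{j=0}^∞ (x a t)^j / (j!)² dx = e^{−a t γ/(γ + 1)} / (γ + 1). (This is the Laplace transform, in the space variable, of the density l_g(x,t) = e^{−x−at} W_{1,1}(xat) of the inverse of the compound Poisson subordinator with exponential jumps; in particular the induced time change T_g(t) = −(1/(2γ)) log of this quantity is linear in t.) -/
/-!
Expanding the Wright function and integrating termwise against `e^{-(γ+1)x}` turns each
`x^j (a t)^j / (j!)²` into `(a t)^j / (j! (γ+1)^{j+1})` by the Gamma integral, so the series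
collapses to `e^{a t/(γ+1)} / (γ+1)`; the factor `e^{-a t}` then gives the exponent
`-a t γ/(γ+1)`. Absolute convergence of the termwise integrals justifies the interchange.
-/

open MeasureTheory Real Set
open scoped Nat

lemma integral_pow_mul_exp_neg_mul_Ioi {c : ℝ} (hc : 0 < c) (n : ℕ) :
    ∫ x in Ioi (0 : ℝ), x ^ n * exp (-(c * x)) = n ! / c ^ (n + 1) := by
  have h := integral_rpow_mul_exp_neg_mul_Ioi (a := n + 1) (by positivity) hc
  simp only [add_sub_cancel_right, rpow_natCast] at h
  rw [h, Gamma_nat_eq_factorial, ← Nat.cast_succ, rpow_natCast, one_div_pow, one_div_mul_eq_div]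

lemma integrableOn_pow_mul_exp_neg_mul_Ioi {c : ℝ} (hc : 0 < c) (n : ℕ) :
    IntegrableOn (fun x : ℝ ↦ x ^ n * exp (-(c * x))) (Ioi 0) := by
  simpa [rpow_natCast] using
    integrableOn_rpow_mul_exp_neg_mul_rpow (s := n) (by linarith [n.cast_nonneg (α := ℝ)])
      one_pos hc

lemma integral_tsum_mul_pow_mul_exp_neg_mul_Ioi {c : ℝ} (hc : 0 < c) {b : ℕ → ℝ}
    (hb : Summable fun n ↦ |b n| * n ! / c ^ (n + 1)) :
    ∫ x in Ioi (0 : ℝ), (∑' n, b n * x ^ n) * exp (-(c * x))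
      = ∑' n, b n * n ! / c ^ (n + 1) := by
  have hint (n : ℕ) : Integrable (fun x ↦ b n * (x ^ n * exp (-(c * x))))
      (volume.restrict (Ioi 0)) :=
    (integrableOn_pow_mul_exp_neg_mul_Ioi hc n).const_mul _
  have hnorm (n : ℕ) :
      ∫ x in Ioi (0 : ℝ), ‖b n * (x ^ n * exp (-(c * x)))‖ = |b n| * n ! / c ^ (n + 1) := by
    rw [setIntegral_congr_fun measurableSet_Ioi fun x (hx : 0 < x) ↦ by
        rw [norm_mul, Real.norm_eq_abs, Real.norm_of_nonneg (by positivity)],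
      integral_const_mul, integral_pow_mul_exp_neg_mul_Ioi hc, mul_div_assoc]
  calc ∫ x in Ioi (0 : ℝ), (∑' n, b n * x ^ n) * exp (-(c * x))
      = ∫ x in Ioi (0 : ℝ), ∑' n, b n * (x ^ n * exp (-(c * x))) := by
        simp_rw [← tsum_mul_right, mul_assoc]
    _ = ∑' n, ∫ x in Ioi (0 : ℝ), b n * (x ^ n * exp (-(c * x))) :=
        (integral_tsum_of_summable_integral_norm hint (by simpa only [hnorm] using hb)).symm
    _ = ∑' n, b n * n ! / c ^ (n + 1) := by
        simp_rw [integral_const_mul, integral_pow_mul_exp_neg_mul_Ioi hc, mul_div_assoc]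

lemma integral_tsum_pow_div_factorial_sq_mul_exp_neg_mul_Ioi {c : ℝ} (hc : 0 < c) (z : ℝ) :
    ∫ x in Ioi (0 : ℝ), (∑' j : ℕ, (x * z) ^ j / (j ! : ℝ) ^ 2) * exp (-(c * x))
      = exp (z / c) / c := by
  have hterm (w : ℝ) (j : ℕ) : w ^ j / (j ! : ℝ) ^ 2 * j ! / c ^ (j + 1)
      = (w / c) ^ j / j ! / c := by
    rw [div_pow]
    field_simp
    ring
  have hsum : Summable fun j : ℕ ↦ |z ^ j / (j ! : ℝ) ^ 2| * j ! / c ^ (j + 1) := by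
    simp only [abs_div, abs_pow, Nat.abs_cast, hterm]
    exact (summable_pow_div_factorial _).div_const c
  simp only [mul_pow, mul_comm (_ ^ _) (z ^ _), mul_div_right_comm]
  rw [integral_tsum_mul_pow_mul_exp_neg_mul_Ioi hc hsum]
  simp only [hterm, tsum_div_const, exp_eq_exp_ℝ, NormedSpace.exp_eq_tsum_div]

theorem stmt16_general (a γ t : ℝ) (hγ : 0 < γ) :
    (∫ x in Set.Ioi (0:ℝ),
        Real.exp (-γ * x) * (Real.exp (-x - a * t) *
          ∑' j : ℕ, (x * a * t) ^ j / ((Nat.factorial j : ℝ)) ^ 2))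
      = Real.exp (-a * t * γ / (γ + 1)) / (γ + 1) := by
  have hc : 0 < γ + 1 := by linarith
  have hintegrand (x : ℝ) : exp (-γ * x) * (exp (-x - a * t) *
        ∑' j : ℕ, (x * a * t) ^ j / (j ! : ℝ) ^ 2)
      = exp (-(a * t)) * ((∑' j : ℕ, (x * (a * t)) ^ j / (j ! : ℝ) ^ 2)
        * exp (-((γ + 1) * x))) := by
    have hexp : exp (-γ * x) * exp (-x - a * t) = exp (-(a * t)) * exp (-((γ + 1) * x)) := by
      rw [← exp_add, ← exp_add]
      ring_nf
    rw [mul_assoc x]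
    linear_combination (∑' j : ℕ, (x * (a * t)) ^ j / (j ! : ℝ) ^ 2) * hexp
  simp only [hintegrand, integral_const_mul,
    integral_tsum_pow_div_factorial_sq_mul_exp_neg_mul_Ioi hc, mul_div_assoc', ← exp_add]
  congr 2
  field_simp
  ring

theorem stmt16 (a γ t : ℝ) (ha : 0 < a) (hγ : 0 < γ) (ht : 0 ≤ t) :
    (∫ x in Set.Ioi (0:ℝ),
        Real.exp (-γ * x) * (Real.exp (-x - a * t) *
          ∑' j : ℕ, (x * a * t) ^ j / ((Nat.factorial j : ℝ)) ^ 2))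
      = Real.exp (-a * t * γ / (γ + 1)) / (γ + 1) :=
  stmt16_general a γ t hγ
end

section
/- For every α ∈ (0,1), every c > 0 and every x > 0, the function x ↦ x^{α−1} · E_{α,α}(−c x^α) is differentiable at x and its derivative equals x^{α−2} · E_{α,α−1}(−c x^α), where the Mittag-Leffler function with second parameter α−1 ≤ 0 is defined through the entire reciprocal Gamma function. -/
open Real Set

lemma aux_pow_le_factorial (m k : ℕ) (h : m ≤ k) : m ^ (k - m) ≤ k.factorial := by
  induction k with
  | zero => interval_cases m; simp
  | succ k ih =>
    rcases Nat.lt_or_ge k m with hk | hk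
    · have : m = k + 1 := le_antisymm h hk
      subst this
      simpa using Nat.one_le_iff_ne_zero.mpr (Nat.factorial_ne_zero _)
    · have h1 := ih hk
      have hs : k + 1 - m = (k - m) + 1 := by omega
      rw [hs, pow_succ, Nat.factorial_succ]
      calc m ^ (k - m) * m ≤ k.factorial * (k + 1) :=
            Nat.mul_le_mul h1 (by omega)
        _ = (k + 1) * k.factorial := Nat.mul_comm _ _

lemma aux_factorial_le_Gamma {t : ℝ} (ht : 2 ≤ t) :
    ((⌊t⌋₊ - 1).factorial : ℝ) ≤ Real.Gamma t := by
  set n := ⌊t⌋₊ with hn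
  have hn2 : 2 ≤ n := Nat.le_floor (by exact_mod_cast ht)
  have hnt : (n : ℝ) ≤ t := Nat.floor_le (by linarith)
  have h1 : Real.Gamma n = (n - 1).factorial := by
    have : n = (n - 1) + 1 := by omega
    rw [this]; push_cast; exact Real.Gamma_nat_eq_factorial _
  rw [← h1]
  exact Real.Gamma_strictMonoOn_Ici.monotoneOn (mem_Ici.mpr (by exact_mod_cast hn2))
    (mem_Ici.mpr ht) hnt

lemma summable_aux {α γ : ℝ} (r : ℝ) (hα : 0 < α) (hγ : 0 < γ) (hr : 0 ≤ r) :
    Summable (fun j : ℕ => r ^ j * (α * j + 1) / Real.Gamma (α * j + γ)) := by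
  -- choose M with 2 ≤ M and 2*(r+1) ≤ M^α
  obtain ⟨M, hM2, hMα⟩ : ∃ M : ℕ, 2 ≤ M ∧ 2 * (r + 1) ≤ (M : ℝ) ^ α := by
    set B := (2 * (r + 1)) ^ (1 / α) with hB
    refine ⟨max 2 (⌈B⌉₊ + 1), le_max_left _ _, ?_⟩
    have hBpos : 0 < 2 * (r + 1) := by linarith
    have hBM : B ≤ (max 2 (⌈B⌉₊ + 1) : ℕ) := by
      have h1 : B ≤ (⌈B⌉₊ : ℝ) := Nat.le_ceil B
      have h2 : (⌈B⌉₊ : ℝ) ≤ ((max 2 (⌈B⌉₊ + 1) : ℕ) : ℝ) := by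
        exact_mod_cast le_trans (Nat.le_succ _) (le_max_right 2 (⌈B⌉₊ + 1))
      linarith
    calc 2 * (r + 1) = (2 * (r + 1)) ^ ((1 / α) * α) := by
            rw [one_div, inv_mul_cancel₀ hα.ne', Real.rpow_one]
      _ = B ^ α := by rw [hB, ← Real.rpow_mul hBpos.le]
      _ ≤ ((max 2 (⌈B⌉₊ + 1) : ℕ) : ℝ) ^ α :=
            Real.rpow_le_rpow (Real.rpow_nonneg hBpos.le _) hBM hα.le
  have hM0 : (0 : ℝ) < M := by exact_mod_cast lt_of_lt_of_le two_pos hM2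
  have hM2' : (2 : ℝ) ≤ M := by exact_mod_cast hM2
  have hM1 : (1 : ℝ) ≤ M := by linarith
  set C := (M : ℝ) ^ ((M : ℝ) + 2) with hC
  have hCpos : 0 < C := Real.rpow_pos_of_pos hM0 _
  -- comparison series
  have hg : Summable (fun j : ℕ => C * (α * j + 1) * (1 / 2 : ℝ) ^ j) := by
    have h1 : Summable (fun j : ℕ => (j : ℝ) * (1 / 2 : ℝ) ^ j) := by
      simpa using summable_pow_mul_geometric_of_norm_lt_one (R := ℝ) 1
        (r := (1 / 2 : ℝ)) (by rw [Real.norm_eq_abs, abs_of_pos] <;> norm_num)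
    have h2 : Summable (fun j : ℕ => (1 / 2 : ℝ) ^ j) := by
      simpa using summable_geometric_two
    have := ((h1.mul_left (C * α)).add (h2.mul_left C))
    refine this.congr fun j => ?_
    ring
  refine Summable.of_norm_bounded_eventually_nat hg ?_
  set J := ⌈((M : ℝ) + 4) / α⌉₊ with hJ
  filter_upwards [Filter.eventually_ge_atTop J] with j hj
  have hαj : (M : ℝ) + 4 ≤ α * j := by
    have h1 : ((M : ℝ) + 4) / α ≤ (J : ℝ) := Nat.le_ceil _
    have h2 : (J : ℝ) ≤ (j : ℝ) := by exact_mod_cast hj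
    have := (div_le_iff₀ hα).mp (le_trans h1 h2)
    linarith [this]
  set t := α * j + γ with hT
  have ht2 : (2 : ℝ) ≤ t := by
    have : (2:ℝ) ≤ (M:ℝ) := by exact_mod_cast hM2
    simp only [hT]; linarith
  have hΓpos : 0 < Real.Gamma t := Real.Gamma_pos_of_pos (by linarith)
  set n := ⌊t⌋₊ with hn
  have hnt : (n : ℝ) ≤ t := Nat.floor_le (by linarith)
  have hnt1 : t < (n : ℝ) + 1 := Nat.lt_floor_add_one t
  have hnM : M + 4 ≤ n := Nat.le_floor (by push_cast; linarith)
  -- Gamma lower bound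
  have key : (2 * (r + 1)) ^ j / C ≤ Real.Gamma t := by
    have s1 : ((n - 1).factorial : ℝ) ≤ Real.Gamma t := aux_factorial_le_Gamma ht2
    have s2 : ((M ^ (n - 1 - M) : ℕ) : ℝ) ≤ ((n - 1).factorial : ℝ) := by
      exact_mod_cast aux_pow_le_factorial M (n - 1) (by omega)
    have s3 : ((M ^ (n - 1 - M) : ℕ) : ℝ) = (M : ℝ) ^ (((n - 1 - M : ℕ) : ℝ)) := by
      push_cast
      rw [Real.rpow_natCast]
    have s4 : (M : ℝ) ^ (α * j - ((M : ℝ) + 2)) ≤ (M : ℝ) ^ (((n - 1 - M : ℕ) : ℝ)) := by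
      apply Real.rpow_le_rpow_of_exponent_le hM1
      have hc : ((n - 1 - M : ℕ) : ℝ) = (n : ℝ) - 1 - M := by
        push_cast [Nat.cast_sub (by omega : 1 ≤ n), Nat.cast_sub (by omega : M ≤ n - 1)]
        ring
      rw [hc]; linarith
    have s5 : (2 * (r + 1)) ^ j / C ≤ (M : ℝ) ^ (α * j - ((M : ℝ) + 2)) := by
      have hnum : (2 * (r + 1)) ^ j ≤ (M : ℝ) ^ (α * j) := by
        calc (2 * (r + 1)) ^ j ≤ ((M : ℝ) ^ α) ^ j :=
              pow_le_pow_left₀ (by linarith) hMα j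
          _ = (M : ℝ) ^ (α * j) := by
              rw [← Real.rpow_natCast ((M:ℝ) ^ α) j, ← Real.rpow_mul hM0.le]
      have he : (M : ℝ) ^ (α * j - ((M : ℝ) + 2)) = (M : ℝ) ^ (α * (j:ℝ)) / C := by
        rw [Real.rpow_sub hM0, hC]
      rw [he]
      gcongr
    linarith
  -- final bound
  have hfnn : 0 ≤ r ^ j * (α * j + 1) / Real.Gamma t := by positivity
  rw [Real.norm_eq_abs, abs_of_nonneg hfnn]
  have hpos : 0 < (2 * (r + 1)) ^ j / C := by positivity
  have hratio : r / (2 * (r + 1)) ≤ 1 / 2 := by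
    rw [div_le_div_iff₀ (by positivity) two_pos]; linarith
  calc r ^ j * (α * j + 1) / Real.Gamma t
      ≤ r ^ j * (α * j + 1) / ((2 * (r + 1)) ^ j / C) := by
        apply div_le_div_of_nonneg_left (by positivity) hpos key
    _ = C * (α * j + 1) * (r / (2 * (r + 1))) ^ j := by
        rw [div_div_eq_mul_div, div_pow]
        field_simp
    _ ≤ C * (α * j + 1) * (1 / 2 : ℝ) ^ j := by
        apply mul_le_mul_of_nonneg_left (pow_le_pow_left₀ (by positivity) hratio j)
          (by positivity)

lemma aux_pow_eq {v : ℝ} (hv : 0 < v) (a b : ℝ) (j : ℕ) :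
    (a * v ^ b) ^ j = a ^ j * v ^ (b * (j : ℝ)) := by
  rw [mul_pow, ← Real.rpow_natCast (v ^ b) j, ← Real.rpow_mul hv.le]

theorem stmt18 (α c x : ℝ) (hα : α ∈ Set.Ioo (0:ℝ) 1) (hc : 0 < c) (hx : 0 < x) :
    HasDerivAt (fun v : ℝ => v ^ (α - 1) * mittagLeffler α α (-c * v ^ α))
      (x ^ (α - 2) * mittagLeffler α (α - 1) (-c * x ^ α)) x := by
  obtain ⟨hα0, hα1⟩ := hα
  set g : ℕ → ℝ → ℝ := fun j v => (-c) ^ j * v ^ (α * j + (α - 1)) / Real.Gamma (α * j + α)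
    with hg_def
  set g' : ℕ → ℝ → ℝ := fun j v =>
      (-c) ^ j * ((α * j + (α - 1)) * v ^ (α * j + (α - 1) - 1)) / Real.Gamma (α * j + α)
    with hg'_def
  set u : ℕ → ℝ := fun j =>
      (x / 2) ^ (α - 2) * ((c * (2 * x) ^ α) ^ j * (α * j + 1) / Real.Gamma (α * j + α))
    with hu_def
  have hxmem : x ∈ Ioo (x / 2) (2 * x) := ⟨by linarith, by linarith⟩
  have hu : Summable u :=
    (summable_aux (c * (2 * x) ^ α) hα0 hα0 (by positivity)).mul_left _
  have hΓp : ∀ j : ℕ, 0 < Real.Gamma (α * j + α) := fun j =>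
    Real.Gamma_pos_of_pos (by positivity)
  have hderiv : ∀ (j : ℕ) (v : ℝ), v ∈ Ioo (x / 2) (2 * x) → HasDerivAt (g j) (g' j v) v := by
    intro j v hv
    have hv0 : 0 < v := lt_trans (by linarith) hv.1
    exact ((Real.hasDerivAt_rpow_const (p := α * j + (α - 1))
      (Or.inl hv0.ne')).const_mul ((-c) ^ j)).div_const _
  have hbound : ∀ (j : ℕ) (v : ℝ), v ∈ Ioo (x / 2) (2 * x) → ‖g' j v‖ ≤ u j := by
    intro j v hv
    have hv0 : 0 < v := lt_trans (by linarith) hv.1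
    have hΓ := hΓp j
    have hnum : |(-c) ^ j * ((α * j + (α - 1)) * v ^ (α * j + (α - 1) - 1))|
        ≤ (x / 2) ^ (α - 2) * ((c * (2 * x) ^ α) ^ j * (α * j + 1)) := by
      have hje : (0:ℝ) ≤ α * j := by positivity
      have habs : |α * (j:ℝ) + (α - 1)| ≤ α * j + 1 := by
        rw [abs_le]; constructor <;> [linarith; linarith]
      have hsplit : v ^ (α * (j:ℝ) + (α - 1) - 1) = v ^ (α * (j:ℝ)) * v ^ (α - 2) := by
        rw [show α * (j:ℝ) + (α - 1) - 1 = α * (j:ℝ) + (α - 2) by ring, Real.rpow_add hv0]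
      have h1 : v ^ (α * (j:ℝ)) ≤ (2 * x) ^ (α * (j:ℝ)) :=
        Real.rpow_le_rpow hv0.le hv.2.le hje
      have h2 : v ^ (α - 2) ≤ (x / 2) ^ (α - 2) :=
        Real.rpow_le_rpow_of_nonpos (by linarith) hv.1.le (by linarith)
      have h3 : (c * (2 * x) ^ α) ^ j = c ^ j * (2 * x) ^ (α * (j:ℝ)) := by
        rw [aux_pow_eq (by linarith : (0:ℝ) < 2 * x), mul_comm α (j:ℝ)]
      rw [abs_mul, abs_pow, abs_neg, abs_of_pos hc, abs_mul,
        abs_of_pos (Real.rpow_pos_of_pos hv0 _), hsplit, h3]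
      calc c ^ j * (|α * (j:ℝ) + (α - 1)| * (v ^ (α * (j:ℝ)) * v ^ (α - 2)))
          ≤ c ^ j * ((α * j + 1) * ((2 * x) ^ (α * (j:ℝ)) * (x / 2) ^ (α - 2))) := by
            apply mul_le_mul_of_nonneg_left _ (by positivity)
            apply mul_le_mul habs _ (by positivity) (by positivity)
            exact mul_le_mul h1 h2 (by positivity) (by positivity)
        _ = (x / 2) ^ (α - 2) * (c ^ j * (2 * x) ^ (α * (j:ℝ)) * (α * j + 1)) := by ring
    calc ‖g' j v‖ = |(-c) ^ j * ((α * j + (α - 1)) * v ^ (α * j + (α - 1) - 1))|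
          / Real.Gamma (α * j + α) := by
            rw [hg'_def, Real.norm_eq_abs, abs_div, abs_of_pos hΓ]
      _ ≤ ((x / 2) ^ (α - 2) * ((c * (2 * x) ^ α) ^ j * (α * j + 1)))
          / Real.Gamma (α * j + α) := by gcongr
      _ = u j := by rw [hu_def]; ring
  have hsum0 : Summable fun j => g j x := by
    have hS : Summable (fun j : ℕ =>
        x ^ (α - 1) * ((c * x ^ α) ^ j * (α * j + 1) / Real.Gamma (α * j + α))) :=
      (summable_aux (c * x ^ α) hα0 hα0 (by positivity)).mul_left _
    refine Summable.of_norm_bounded hS fun j => ?_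
    have hΓ := hΓp j
    have he : g j x = (-1 : ℝ) ^ j * (x ^ (α - 1) * ((c * x ^ α) ^ j / Real.Gamma (α * j + α))) := by
      simp only [hg_def]
      have h3 : (c * x ^ α) ^ j = c ^ j * x ^ (α * (j:ℝ)) := by
        rw [aux_pow_eq hx, mul_comm α (j:ℝ)]
      have h4 : x ^ (α * (j:ℝ) + (α - 1)) = x ^ (α * (j:ℝ)) * x ^ (α - 1) := Real.rpow_add hx _ _
      rw [h3, h4, show (-c) ^ j = (-1:ℝ)^j * c ^ j by rw [← neg_one_mul, mul_pow]]
      ring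
    rw [he, Real.norm_eq_abs, abs_mul, abs_pow, abs_neg, abs_one, one_pow, one_mul,
      abs_of_nonneg (by positivity)]
    have h5 : (0:ℝ) ≤ α * j := by positivity
    calc x ^ (α - 1) * ((c * x ^ α) ^ j / Real.Gamma (α * j + α))
        ≤ x ^ (α - 1) * ((c * x ^ α) ^ j * (α * j + 1) / Real.Gamma (α * j + α)) := by
          apply mul_le_mul_of_nonneg_left _ (by positivity)
          rw [div_le_div_iff_of_pos_right hΓ]
          nlinarith [pow_nonneg (by positivity : (0:ℝ) ≤ c * x ^ α) j, h5]
      _ = _ := rfl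
  have H : HasDerivAt (fun z => ∑' j, g j z) (∑' j, g' j x) x :=
    hasDerivAt_tsum_of_isPreconnected hu isOpen_Ioo isPreconnected_Ioo
      hderiv hbound hxmem hsum0 hxmem
  have hA : (fun v : ℝ => v ^ (α - 1) * mittagLeffler α α (-c * v ^ α))
      =ᶠ[nhds x] (fun z => ∑' j, g j z) := by
    filter_upwards [isOpen_Ioo.mem_nhds hxmem] with v hv
    have hv0 : 0 < v := lt_trans (by linarith) hv.1
    rw [mittagLeffler, ← tsum_mul_left]
    apply tsum_congr
    intro j
    simp only [hg_def]
    have h3 : (-c * v ^ α) ^ j = (-c) ^ j * v ^ (α * (j:ℝ)) := by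
      rw [aux_pow_eq hv0, mul_comm α (j:ℝ)]
    have h4 : v ^ (α * (j:ℝ) + (α - 1)) = v ^ (α * (j:ℝ)) * v ^ (α - 1) := Real.rpow_add hv0 _ _
    rw [h3, h4]
    ring
  have hB : ∑' j, g' j x = x ^ (α - 2) * mittagLeffler α (α - 1) (-c * x ^ α) := by
    rw [mittagLeffler, ← tsum_mul_left]
    apply tsum_congr
    intro j
    simp only [hg'_def]
    have hΓid : (α * (j:ℝ) + (α - 1)) / Real.Gamma (α * (j:ℝ) + α)
        = 1 / Real.Gamma (α * (j:ℝ) + (α - 1)) := by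
      rcases eq_or_ne (α * (j:ℝ) + (α - 1)) 0 with h0 | h0
      · rw [h0, show α * (j:ℝ) + α = (α * (j:ℝ) + (α - 1)) + 1 by ring, h0]
        simp [Real.Gamma_zero]
      · rw [show α * (j:ℝ) + α = (α * (j:ℝ) + (α - 1)) + 1 by ring,
          Real.Gamma_add_one h0, ← div_div, div_self h0]
    have h3 : (-c * x ^ α) ^ j = (-c) ^ j * x ^ (α * (j:ℝ)) := by
      rw [aux_pow_eq hx, mul_comm α (j:ℝ)]
    have h4 : x ^ (α * (j:ℝ) + (α - 1) - 1) = x ^ (α * (j:ℝ)) * x ^ (α - 2) := by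
      rw [show α * (j:ℝ) + (α - 1) - 1 = α * (j:ℝ) + (α - 2) by ring, Real.rpow_add hx]
    rw [h3, h4]
    calc (-c) ^ j * ((α * ↑j + (α - 1)) * (x ^ (α * (j:ℝ)) * x ^ (α - 2)))
          / Real.Gamma (α * ↑j + α)
        = ((-c) ^ j * x ^ (α * (j:ℝ)) * x ^ (α - 2))
          * ((α * ↑j + (α - 1)) / Real.Gamma (α * ↑j + α)) := by ring
      _ = ((-c) ^ j * x ^ (α * (j:ℝ)) * x ^ (α - 2))
          * (1 / Real.Gamma (α * ↑j + (α - 1))) := by rw [hΓid]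
      _ = x ^ (α - 2) * ((-c) ^ j * x ^ (α * (j:ℝ)) / Real.Gamma (α * ↑j + (α - 1))) := by
          ring
  exact hB ▸ H.congr_of_eventuallyEq hA
end
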